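/- arXiv:math/0010070 — 2 statements merged into one kernel-verified Lean document; each statement's English description precedes it below -/
import Mathlib

section
/- (1) The special conditions are dense in Q^mt_4(K,Σ,F): for every p ∈ Q^mt_4(K,Σ,F) there is a special condition q ∈ Q^mt_4(K,Σ,F) with p ≤ q. (2) If p ∈ Q^mt_∅(K,Σ,F) is normal and A is a front of T^p, then μ^F(p) = μ^f_{p,A}(root(T^p)), where f : A → [0,1] is given by f(ν) = μ^F_p(ν). -/
namespace MeasuredTrees

/-- `η` is a valid node for `H`: a finite sequence with `η i ∈ H i` for all `i < lh η`. -/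
def ValidNode (H : ℕ → Finset ℕ) (η : List ℕ) : Prop :=
  ∀ (i : ℕ) (h : i < η.length), η.get ⟨i, h⟩ ∈ H i

/-- A local tree-creature for `H`: a node `η_t`, a nonnegative norm, and a nonempty set
`pos(t)` of nodes of length `lh(η_t)+1` properly extending `η_t`. -/
structure TCreature (H : ℕ → Finset ℕ) where
  node : List ℕ
  node_ok : ValidNode H node
  nor : ℝ
  nor_nonneg : 0 ≤ nor
  pos : Finset (List ℕ)
  pos_ne : pos.Nonempty
  pos_ok : ∀ ν ∈ pos, node <+: ν ∧ ν.length = node.length + 1 ∧ ValidNode H ν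

/-- A measured tree creating triple `(K, Σ, F)` for `H` (data part). -/
structure MTriple (H : ℕ → Finset ℕ) where
  K : Set (TCreature H)
  Sig : TCreature H → Set (TCreature H)
  F : TCreature H → (List ℕ → ℝ) → ℝ

variable {H : ℕ → Finset ℕ}

/-- The structural requirements: `(K,Σ)` is a strongly finitary local tree-creating
pair, each `H m` has at least two elements, and each `F t` is a map
`[0,1]^{pos t} → [0,1]` (represented on total functions, depending only on the
values on `pos t`). -/
structure MTriple.Good (T : MTriple H) : Prop where
  H_two : ∀ m : ℕ, 2 ≤ (H m).card
  sig_mem : ∀ t ∈ T.K, T.Sig t ⊆ T.K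
  sig_node : ∀ t s : TCreature H, s ∈ T.Sig t → s.node = t.node
  sig_pos : ∀ t s : TCreature H, s ∈ T.Sig t → s.pos ⊆ t.pos
  sig_trans : ∀ t s : TCreature H, s ∈ T.Sig t → T.Sig s ⊆ T.Sig t
  finitary : ∀ η : List ℕ, {t : TCreature H | t ∈ T.K ∧ t.node = η}.Finite
  F_congr : ∀ (t : TCreature H) (r r' : List ℕ → ℝ),
    (∀ ν ∈ t.pos, r ν = r' ν) → T.F t r = T.F t r'
  F_mem : ∀ (t : TCreature H) (r : List ℕ → ℝ),
    (∀ ν ∈ t.pos, r ν ∈ Set.Icc (0 : ℝ) 1) → T.F t r ∈ Set.Icc (0 : ℝ) 1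

/-- The triple is nice: monotonicity (α), splitting (β), homogeneity (γ) and
approximation (δ). -/
structure MTriple.Nice (T : MTriple H) : Prop where
  mono : ∀ t ∈ T.K, ∀ r r' : List ℕ → ℝ,
    (∀ ν ∈ t.pos, r ν ∈ Set.Icc (0 : ℝ) 1) → (∀ ν ∈ t.pos, r' ν ∈ Set.Icc (0 : ℝ) 1) →
    (∀ ν ∈ t.pos, r ν ≤ r' ν) → T.F t r ≤ T.F t r'
  split : ∀ t ∈ T.K, 1 < t.nor →
    ∀ r r0 r1 : List ℕ → ℝ,
    (∀ ν ∈ t.pos, r ν ∈ Set.Icc (0 : ℝ) 1 ∧ r0 ν ∈ Set.Icc (0 : ℝ) 1 ∧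
      r1 ν ∈ Set.Icc (0 : ℝ) 1) →
    (∀ ν ∈ t.pos, r ν ≤ r0 ν + r1 ν) →
    ((2 : ℝ) ^ (2 ^ t.node.length))⁻¹ ≤ T.F t r →
    ∃ c0 c1 : ℝ, ∃ s0 s1 : TCreature H, s0 ∈ T.Sig t ∧ s1 ∈ T.Sig t ∧
      c0 + c1 = (1 - ((2 : ℝ) ^ (2 ^ t.node.length))⁻¹) * T.F t r ∧
      (0 < c0 → t.nor - 1 ≤ s0.nor ∧ (∀ ν ∈ s0.pos, 0 < r0 ν) ∧ c0 ≤ T.F s0 r0) ∧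
      (0 < c1 → t.nor - 1 ≤ s1.nor ∧ (∀ ν ∈ s1.pos, 0 < r1 ν) ∧ c1 ≤ T.F s1 r1)
  scale : ∀ t ∈ T.K, ∀ b : ℝ, b ∈ Set.Icc (0 : ℝ) 1 →
    ∀ r : List ℕ → ℝ, (∀ ν ∈ t.pos, r ν ∈ Set.Icc (0 : ℝ) 1) →
    T.F t (fun ν => b * r ν) = b * T.F t r
  approx : ∀ t ∈ T.K, ∀ r : List ℕ → ℝ, (∀ ν ∈ t.pos, r ν ∈ Set.Icc (0 : ℝ) 1) →
    ∀ ε : ℝ, 0 < ε →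
    ∃ r' : List ℕ → ℝ, (∀ ν ∈ t.pos, r ν < r' ν) ∧
      ∀ r'' : List ℕ → ℝ, (∀ ν ∈ t.pos, r'' ν ∈ Set.Icc (0 : ℝ) 1) →
        (∀ ν ∈ t.pos, r ν ≤ r'' ν ∧ r'' ν < r' ν) → T.F t r'' < T.F t r + ε

/-- A condition of `Q^tree_∅(K,Σ)`: a tree of nodes with no maximal elements,
together with a creature of `K` at every node whose possibilities are exactly the
successors in the tree. -/
structure Cond (T : MTriple H) where
  tree : Set (List ℕ)
  root : List ℕ
  root_mem : root ∈ tree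
  root_le : ∀ η ∈ tree, root <+: η
  closed : ∀ η ∈ tree, ∀ ν : List ℕ, root <+: ν → ν <+: η → ν ∈ tree
  c : List ℕ → TCreature H
  c_mem : ∀ η ∈ tree, c η ∈ T.K
  c_node : ∀ η ∈ tree, (c η).node = η
  succ_eq : ∀ η ∈ tree, ∀ ν : List ℕ,
    ((ν ∈ tree ∧ η <+: ν ∧ ν.length = η.length + 1) ↔ ν ∈ (c η).pos)

variable {T : MTriple H}

/-- The initial segment of length `n` of an infinite sequence. -/
def initSeg (x : ℕ → ℕ) (n : ℕ) : List ℕ := (List.range n).map x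

/-- `x` is an ω-branch of the tree of `p` through the node `η`. -/
def IsBranchAt (p : Cond T) (η : List ℕ) (x : ℕ → ℕ) : Prop :=
  initSeg x η.length = η ∧ ∀ n : ℕ, η.length ≤ n → initSeg x n ∈ p.tree

/-- `A` is a front of the tree of `p^{[η]}`: a set of nodes of the tree extending `η`
met by every ω-branch through `η`. -/
def IsFrontAt (p : Cond T) (η : List ℕ) (A : Set (List ℕ)) : Prop :=
  (∀ ρ ∈ A, ρ ∈ p.tree ∧ η <+: ρ) ∧
  ∀ x : ℕ → ℕ, IsBranchAt p η x → ∃ n : ℕ, initSeg x n ∈ A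

/-- `ρ ∈ T[p^{[η]}, A]`, i.e. `ρ` is a node of the tree of `p` extending `η` and lying
(weakly) below some member of `A`. -/
def InCone (p : Cond T) (η : List ℕ) (A : Set (List ℕ)) (ρ : List ℕ) : Prop :=
  ρ ∈ p.tree ∧ η <+: ρ ∧ ∃ ν ∈ A, ρ <+: ν

/-- `m` is the function `μ^f_{p^{[η]},A}` (extended by `0` off `T[p^{[η]},A]`):
it equals `f` on `A` and satisfies the downward recursion
`m ρ = F_{t^p_ρ}(m ν : ν ∈ pos(t^p_ρ))` on `T[p^{[η]},A] ∖ A`. -/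
def IsMuAt (p : Cond T) (η : List ℕ) (A : Set (List ℕ))
    (f : List ℕ → ℝ) (m : List ℕ → ℝ) : Prop :=
  (∀ ρ ∈ A, m ρ = f ρ) ∧
  (∀ ρ : List ℕ, InCone p η A ρ → ρ ∉ A → m ρ = T.F (p.c ρ) m) ∧
  (∀ ρ : List ℕ, ¬ InCone p η A ρ → m ρ = 0)

/-- `μ^F_p(η)`: the infimum over fronts `A` of `p^{[η]}` of `μ^{1_A}_{p^{[η]},A}(η)`. -/
noncomputable def muAt (p : Cond T) (η : List ℕ) : ℝ :=
  sInf {x : ℝ | ∃ (A : Set (List ℕ)) (m : List ℕ → ℝ),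
    IsFrontAt p η A ∧ IsMuAt p η A (fun _ => 1) m ∧ x = m η}

/-- `μ^F(p) = μ^F_p(root p)`. -/
noncomputable def muF (p : Cond T) : ℝ := muAt p p.root

/-- The norm condition (c)₄ defining `Q^tree_4(K,Σ)` : for every `n` the set of nodes
above which all norms are at least `n` contains a front. -/
def Qtree4 (p : Cond T) : Prop :=
  ∀ n : ℕ, ∃ A : Set (List ℕ), IsFrontAt p p.root A ∧
    ∀ ν ∈ A, ∀ ρ ∈ p.tree, ν <+: ρ → (n : ℝ) ≤ (p.c ρ).nor

/-- The order on conditions: `p ≤ q` iff the tree of `q` is contained in that of `p`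
and each creature of `q` belongs to `Σ` of the corresponding creature of `p`. -/
def CondLe (p q : Cond T) : Prop :=
  q.tree ⊆ p.tree ∧ ∀ η ∈ q.tree, q.c η ∈ T.Sig (p.c η)

/-- `p` is normal: `μ^F_p(η) > 0` for every node `η` of the tree of `p`. -/
def Normal (p : Cond T) : Prop := ∀ η ∈ p.tree, 0 < muAt p η

/-- `p` is special: `μ^F_p(η) ≥ 2^(−2^(lh η + 1))` for every node `η`. -/
def Special (p : Cond T) : Prop :=
  ∀ η ∈ p.tree, ((2 : ℝ) ^ (2 ^ (η.length + 1)))⁻¹ ≤ muAt p η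

section Aux
open List
variable {H : ℕ → Finset ℕ} {T : MTriple H}

lemma initSeg_length (x : ℕ → ℕ) (n : ℕ) : (initSeg x n).length = n := by
  simp [initSeg]

lemma initSeg_getElem (x : ℕ → ℕ) (n i : ℕ) (h : i < (initSeg x n).length) :
    (initSeg x n)[i] = x i := by
  simp [initSeg] at h ⊢

lemma initSeg_take (x : ℕ → ℕ) {m n : ℕ} (h : m ≤ n) :
    (initSeg x n).take m = initSeg x m := by
  rw [initSeg, initSeg, ← List.map_take, List.take_range, Nat.min_eq_left h]

lemma initSeg_prefix (x : ℕ → ℕ) {m n : ℕ} (h : m ≤ n) :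
    initSeg x m <+: initSeg x n := by
  rw [← initSeg_take x h]; exact List.take_prefix _ _

lemma eq_of_prefix_of_length {l₁ l₂ : List ℕ} (h : l₁ <+: l₂) (hl : l₁.length = l₂.length) :
    l₁ = l₂ := List.IsPrefix.eq_of_length h hl

lemma prefix_comparable {l₁ l₂ l₃ : List ℕ} (h₁ : l₁ <+: l₃) (h₂ : l₂ <+: l₃) :
    l₁ <+: l₂ ∨ l₂ <+: l₁ := List.prefix_or_prefix_of_prefix h₁ h₂

lemma prefix_of_le_prefix {l₁ l₂ l₃ : List ℕ} (h₁ : l₁ <+: l₃) (h₂ : l₂ <+: l₃)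
    (hl : l₁.length ≤ l₂.length) : l₁ <+: l₂ := by
  rcases prefix_comparable h₁ h₂ with h | h
  · exact h
  · have := h.length_le
    have : l₂ = l₁ := eq_of_prefix_of_length h (le_antisymm this hl)
    subst this; exact List.prefix_refl _
-- ## Tree basics
lemma Cond.mem_of_prefix (p : Cond T) {η ρ : List ℕ} (hρ : ρ ∈ p.tree)
    (h1 : p.root <+: η) (h2 : η <+: ρ) : η ∈ p.tree := p.closed ρ hρ η h1 h2

lemma Cond.node_eq (p : Cond T) {η : List ℕ} (h : η ∈ p.tree) : (p.c η).node = η :=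
  p.c_node η h

lemma Cond.pos_sub (p : Cond T) {η ν : List ℕ} (hη : η ∈ p.tree) (hν : ν ∈ (p.c η).pos) :
    ν ∈ p.tree ∧ η <+: ν ∧ ν.length = η.length + 1 :=
  ((p.succ_eq η hη ν).mpr hν)

lemma Cond.pos_of_mem (p : Cond T) {η ν : List ℕ} (hη : η ∈ p.tree) (hν : ν ∈ p.tree)
    (h1 : η <+: ν) (h2 : ν.length = η.length + 1) : ν ∈ (p.c η).pos :=
  (p.succ_eq η hη ν).mp ⟨hν, h1, h2⟩

/-- the chosen one-step extension of a node -/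
noncomputable def Cond.ext1 (p : Cond T) (η : List ℕ) : List ℕ :=
  (p.c η).pos_ne.choose

lemma Cond.ext1_mem (p : Cond T) (η : List ℕ) : p.ext1 η ∈ (p.c η).pos :=
  (p.c η).pos_ne.choose_spec

/-- the chosen chain upwards from a node -/
noncomputable def Cond.chain (p : Cond T) (ρ : List ℕ) : ℕ → List ℕ
  | 0 => ρ
  | n+1 => p.ext1 (p.chain ρ n)

lemma Cond.chain_mem (p : Cond T) {ρ : List ℕ} (hρ : ρ ∈ p.tree) (n : ℕ) :
    p.chain ρ n ∈ p.tree ∧ (p.chain ρ n).length = ρ.length + n ∧ ρ <+: p.chain ρ n := by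
  induction n with
  | zero => exact ⟨hρ, rfl, List.prefix_refl _⟩
  | succ n ih =>
    obtain ⟨h1, h2, h3⟩ := ih
    obtain ⟨h4, h5, h6⟩ := p.pos_sub h1 (p.ext1_mem (p.chain ρ n))
    exact ⟨h4, by simp [Cond.chain, h6, h2, Nat.add_assoc], h3.trans (by simpa [Cond.chain] using h5)⟩

lemma Cond.chain_prefix (p : Cond T) {ρ : List ℕ} (hρ : ρ ∈ p.tree) {m n : ℕ} (h : m ≤ n) :
    p.chain ρ m <+: p.chain ρ n := by
  induction n with
  | zero => simp [Nat.le_zero.mp h]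
  | succ n ih =>
    rcases Nat.lt_or_ge m (n+1) with h' | h'
    · refine (ih (by omega)).trans ?_
      obtain ⟨h4, h5, h6⟩ := p.pos_sub (p.chain_mem hρ n).1 (p.ext1_mem (p.chain ρ n))
      simpa [Cond.chain] using h5
    · have : m = n + 1 := le_antisymm h h'
      subst this; exact List.prefix_refl _

/-- the branch through the chosen chain -/
noncomputable def Cond.branch (p : Cond T) (ρ : List ℕ) : ℕ → ℕ :=
  fun i => (p.chain ρ (i + 1 - ρ.length)).getD i 0

lemma Cond.initSeg_branch (p : Cond T) {ρ : List ℕ} (hρ : ρ ∈ p.tree) {n : ℕ}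
    (h : ρ.length ≤ n) : initSeg (p.branch ρ) n = p.chain ρ (n - ρ.length) := by
  apply List.ext_getElem
  · rw [initSeg_length, (p.chain_mem hρ _).2.1]; omega
  · intro i h1 h2
    have hin : i < n := by rwa [initSeg_length] at h1
    rw [initSeg_getElem]
    show (p.chain ρ (i + 1 - ρ.length)).getD i 0 = _
    have hlen : (p.chain ρ (i + 1 - ρ.length)).length = max ρ.length (i+1) := by
      rw [(p.chain_mem hρ _).2.1]; omega
    have hi : i < (p.chain ρ (i + 1 - ρ.length)).length := by omega
    rw [List.getD_eq_getElem _ _ hi]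
    have hpre : p.chain ρ (i + 1 - ρ.length) <+: p.chain ρ (n - ρ.length) :=
      p.chain_prefix hρ (by omega)
    exact hpre.getElem hi

lemma Cond.isBranchAt_self (p : Cond T) {ρ : List ℕ} (hρ : ρ ∈ p.tree) :
    IsBranchAt p ρ (p.branch ρ) := by
  constructor
  · rw [p.initSeg_branch hρ (le_refl _)]; simp [Cond.chain]
  · intro n hn
    rw [p.initSeg_branch hρ hn]
    exact (p.chain_mem hρ _).1

lemma isBranchAt_of_prefix (p : Cond T) {η ρ : List ℕ} {x : ℕ → ℕ}
    (hη : η ∈ p.tree) (hρ : ρ ∈ p.tree) (hpre : η <+: ρ) (hx : IsBranchAt p ρ x) :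
    IsBranchAt p η x := by
  have hlen := hpre.length_le
  have hη' : initSeg x η.length = η := by
    have h1 : initSeg x η.length <+: initSeg x ρ.length := initSeg_prefix x hlen
    rw [hx.1] at h1
    exact eq_of_prefix_of_length (prefix_of_le_prefix h1 hpre (by rw [initSeg_length]))
      (by rw [initSeg_length])
  refine ⟨hη', fun n hn => ?_⟩
  rcases Nat.lt_or_ge n ρ.length with h | h
  · have h1 : initSeg x n <+: ρ := by
      rw [← hx.1]; exact initSeg_prefix x (by omega)
    refine p.mem_of_prefix hρ ?_ h1
    have hroot : p.root <+: ρ := p.root_le ρ hρ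
    refine prefix_of_le_prefix hroot h1 ?_
    rw [initSeg_length]
    exact le_trans ((p.root_le η hη).length_le) hn
  · exact hx.2 n h

lemma exists_branchAt (p : Cond T) {η : List ℕ} (hη : η ∈ p.tree) :
    ∃ x, IsBranchAt p η x := ⟨p.branch η, p.isBranchAt_self hη⟩

lemma branch_mem_tree {p : Cond T} {η : List ℕ} {x : ℕ → ℕ} (hx : IsBranchAt p η x)
    {n : ℕ} (hn : η.length ≤ n) : initSeg x n ∈ p.tree ∧ η <+: initSeg x n := by
  refine ⟨hx.2 n hn, ?_⟩
  rw [← hx.1]; exact initSeg_prefix x hn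
-- ## Fronts and the finite inner region Bset

lemma prefix_initSeg {x : ℕ → ℕ} {n : ℕ} {σ : List ℕ} (h : σ <+: initSeg x n) :
    σ = initSeg x σ.length := by
  have h1 : σ.length ≤ n := by
    have := h.length_le; rwa [initSeg_length] at this
  have := List.prefix_iff_eq_take.mp h
  rw [this, initSeg_take x h1, initSeg_length]

lemma IsFrontAt.tree_mem {p : Cond T} {η : List ℕ} {A : Set (List ℕ)}
    (hA : IsFrontAt p η A) {ρ : List ℕ} (h : ρ ∈ A) : ρ ∈ p.tree := (hA.1 ρ h).1

lemma IsFrontAt.prefix_mem {p : Cond T} {η : List ℕ} {A : Set (List ℕ)}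
    (hA : IsFrontAt p η A) {ρ : List ℕ} (h : ρ ∈ A) : η <+: ρ := (hA.1 ρ h).2

/-- the region of the tree at-or-above `η` which has no strict predecessor in `A` -/
def Bset (p : Cond T) (η : List ℕ) (A : Set (List ℕ)) : Set (List ℕ) :=
  {ρ | ρ ∈ p.tree ∧ η <+: ρ ∧ ∀ σ, η <+: σ → σ <+: ρ → σ ≠ ρ → σ ∉ A}

lemma Bset_tree {p : Cond T} {η : List ℕ} {A : Set (List ℕ)} {ρ : List ℕ}
    (h : ρ ∈ Bset p η A) : ρ ∈ p.tree := h.1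

lemma self_mem_Bset {p : Cond T} {η : List ℕ} (hη : η ∈ p.tree) (A : Set (List ℕ)) :
    η ∈ Bset p η A := by
  refine ⟨hη, List.prefix_refl _, fun σ h1 h2 h3 => absurd ?_ h3⟩
  exact eq_of_prefix_of_length h2 (le_antisymm h2.length_le h1.length_le)

lemma strict_prefix_length {σ ρ : List ℕ} (h : σ <+: ρ) (hne : σ ≠ ρ) :
    σ.length < ρ.length := by
  rcases Nat.lt_or_ge σ.length ρ.length with h' | h'
  · exact h'
  · exact absurd (eq_of_prefix_of_length h (le_antisymm h.length_le h')) hne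

lemma Bset_child {p : Cond T} {η : List ℕ} {A : Set (List ℕ)} {ρ ν : List ℕ}
    (hρ : ρ ∈ Bset p η A) (hρA : ρ ∉ A) (hν : ν ∈ (p.c ρ).pos) : ν ∈ Bset p η A := by
  obtain ⟨h1, h2, h3⟩ := p.pos_sub hρ.1 hν
  refine ⟨h1, hρ.2.1.trans h2, fun σ hs1 hs2 hs3 => ?_⟩
  have hsl : σ.length < ν.length := strict_prefix_length hs2 hs3
  have hsρ : σ <+: ρ := prefix_of_le_prefix hs2 h2 (by omega)
  by_cases heq : σ = ρ
  · subst heq; exact hρA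
  · exact hρ.2.2 σ hs1 hsρ heq

lemma Bset_take {p : Cond T} {η : List ℕ} {A : Set (List ℕ)} {ρ : List ℕ}
    (hη : η ∈ p.tree) (hρ : ρ ∈ Bset p η A) {k : ℕ} (hk : η.length ≤ k) (hk2 : k ≤ ρ.length) :
    ρ.take k ∈ Bset p η A ∧ ρ.take k <+: ρ := by
  have htp : ρ.take k <+: ρ := List.take_prefix _ _
  have hlen : (ρ.take k).length = k := by rw [List.length_take]; omega
  have hηt : η <+: ρ.take k := prefix_of_le_prefix hρ.2.1 htp (by omega)
  have hroot : p.root <+: ρ.take k :=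
    prefix_of_le_prefix (p.root_le ρ hρ.1) htp
      (le_trans (le_trans (p.root_le η hη).length_le hk) (le_of_eq hlen.symm))
  refine ⟨⟨p.mem_of_prefix hρ.1 hroot htp, hηt, fun σ hs1 hs2 hs3 => ?_⟩, htp⟩
  refine hρ.2.2 σ hs1 (hs2.trans htp) fun hc => ?_
  subst hc
  have := strict_prefix_length hs2 hs3
  omega
lemma IsFrontAt.first_hit {p : Cond T} {η : List ℕ} {A : Set (List ℕ)}
    (hA : IsFrontAt p η A) {x : ℕ → ℕ} (hx : IsBranchAt p η x) :
    ∃ n, initSeg x n ∈ A ∧ initSeg x n ∈ Bset p η A := by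
  classical
  obtain ⟨n, hn⟩ := hA.2 x hx
  have hex : ∃ n, initSeg x n ∈ A := ⟨n, hn⟩
  set n₀ := Nat.find hex with hn₀
  have hmem : initSeg x n₀ ∈ A := Nat.find_spec hex
  have hlen : η.length ≤ n₀ := by
    have := (hA.prefix_mem hmem).length_le
    rwa [initSeg_length] at this
  refine ⟨n₀, hmem, hx.2 n₀ hlen, hA.prefix_mem hmem, fun σ hs1 hs2 hs3 => ?_⟩
  have hσ : σ = initSeg x σ.length := prefix_initSeg hs2
  have hσlen : σ.length < n₀ := by
    have h1 := strict_prefix_length hs2 hs3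
    rwa [initSeg_length] at h1
  rw [hσ]
  exact Nat.find_min hex hσlen

lemma IsFrontAt.hit_comparable {p : Cond T} {η : List ℕ} {A : Set (List ℕ)}
    (hA : IsFrontAt p η A) (hη : η ∈ p.tree) {ρ : List ℕ} (hρ : ρ ∈ p.tree)
    (hpre : η <+: ρ) : ∃ d ∈ A, d <+: ρ ∨ ρ <+: d := by
  obtain ⟨x, hx⟩ := exists_branchAt p hρ
  have hx' : IsBranchAt p η x := isBranchAt_of_prefix p hη hρ hpre hx
  obtain ⟨n, hn⟩ := hA.2 x hx'
  refine ⟨initSeg x n, hn, ?_⟩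
  have hρx : ρ = initSeg x ρ.length := by rw [hx.1]
  rcases Nat.le_total n ρ.length with h | h
  · left; rw [hρx]; exact initSeg_prefix x h
  · right; rw [hρx]; exact initSeg_prefix x h

lemma Bset_inCone {p : Cond T} {η : List ℕ} {A : Set (List ℕ)}
    (hA : IsFrontAt p η A) (hη : η ∈ p.tree) {ρ : List ℕ} (hρ : ρ ∈ Bset p η A) :
    InCone p η A ρ := by
  refine ⟨hρ.1, hρ.2.1, ?_⟩
  obtain ⟨d, hd, hcomp⟩ := hA.hit_comparable hη hρ.1 hρ.2.1
  rcases hcomp with h | h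
  · rcases eq_or_ne d ρ with he | he
    · exact ⟨d, hd, he ▸ List.prefix_refl _⟩
    · exact absurd hd (hρ.2.2 d (hA.prefix_mem hd) h he)
  · exact ⟨d, hd, h⟩

lemma exists_branch_of_chain (f : ℕ → List ℕ)
    (hlen : ∀ n, (f n).length = (f 0).length + n)
    (hpre : ∀ m n, m ≤ n → f m <+: f n) :
    ∃ x : ℕ → ℕ, ∀ n, (f 0).length ≤ n → initSeg x n = f (n - (f 0).length) := by
  set L := (f 0).length with hL
  refine ⟨fun i => (f (i + 1 - L)).getD i 0, fun n hn => ?_⟩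
  apply List.ext_getElem
  · rw [initSeg_length, hlen]; omega
  · intro i h1 h2
    have hin : i < n := by rwa [initSeg_length] at h1
    rw [initSeg_getElem]
    show (f (i + 1 - L)).getD i 0 = _
    have hil : (f (i + 1 - L)).length = max L (i + 1) := by rw [hlen]; omega
    have hi : i < (f (i + 1 - L)).length := by omega
    rw [List.getD_eq_getElem _ _ hi]
    exact (hpre _ _ (by omega)).getElem hi

/-- König's lemma : the inner region of a front is finite. -/
lemma Bset_finite {p : Cond T} {η : List ℕ} {A : Set (List ℕ)}
    (hA : IsFrontAt p η A) (hη : η ∈ p.tree) : (Bset p η A).Finite := by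
  by_contra hinf
  replace hinf : (Bset p η A).Infinite := hinf
  set D : List ℕ → Set (List ℕ) := fun ρ => {τ ∈ Bset p η A | ρ <+: τ} with hD
  set P : List ℕ → Prop := fun ρ => ρ ∈ Bset p η A ∧ (D ρ).Infinite with hP
  have hDB : ∀ ν, (D ν).Nonempty → ν.length = η.length + 1 + (ν.length - η.length - 1) + 0 →
      True := fun _ _ _ => trivial
  have hstep : ∀ ρ, P ρ → ∃ ν, P ν ∧ ν.length = ρ.length + 1 ∧ ρ <+: ν := by
    intro ρ hPρ
    have hηρ : η.length ≤ ρ.length := hPρ.1.2.1.length_le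
    have hsub : D ρ ⊆ insert ρ (⋃ ν ∈ (p.c ρ).pos, D ν) := by
      intro τ hτ
      rcases eq_or_ne τ ρ with he | he
      · exact he ▸ Set.mem_insert _ _
      · have hlen : ρ.length < τ.length := by
          have h1 := hτ.2.length_le
          rcases Nat.lt_or_ge ρ.length τ.length with h | h
          · exact h
          · exact absurd (eq_of_prefix_of_length hτ.2 (le_antisymm h1 h)).symm he
        have hνB := Bset_take hη hτ.1 (k := ρ.length + 1) (by omega) (by omega)
        have hνlen : (τ.take (ρ.length + 1)).length = ρ.length + 1 := by
          rw [List.length_take]; omega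
        have hρν : ρ <+: τ.take (ρ.length + 1) :=
          prefix_of_le_prefix hτ.2 hνB.2 (by omega)
        have hνpos : τ.take (ρ.length + 1) ∈ (p.c ρ).pos :=
          p.pos_of_mem hPρ.1.1 hνB.1.1 hρν hνlen
        exact Set.mem_insert_of_mem _ (Set.mem_biUnion hνpos ⟨hτ.1, List.take_prefix _ _⟩)
    by_contra hno
    push_neg at hno
    have hfin : ∀ ν ∈ (p.c ρ).pos, (D ν).Finite := by
      intro ν hν
      rw [← Set.not_infinite]
      intro hinf'
      obtain ⟨h1, h2, h3⟩ := p.pos_sub hPρ.1.1 hν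
      obtain ⟨τ, hτ⟩ := hinf'.nonempty
      have hνtake : ν = τ.take ν.length := List.prefix_iff_eq_take.mp hτ.2
      have hνB : ν ∈ Bset p η A := by
        rw [hνtake]
        exact (Bset_take hη hτ.1 (by omega) hτ.2.length_le).1
      exact hno ν ⟨hνB, hinf'⟩ (by omega) h2
    exact hPρ.2 (Set.Finite.subset (Set.Finite.insert ρ
      (Set.Finite.biUnion (Finset.finite_toSet _) hfin)) hsub)
  have hPη : P η := by
    refine ⟨self_mem_Bset hη A, Set.Infinite.mono (fun τ hτ => ⟨hτ, ?_⟩) hinf⟩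
    exact hτ.2.1
  choose g hg1 hg2 hg3 using hstep
  let ch : ℕ → {ρ : List ℕ // P ρ} := fun n =>
    Nat.rec ⟨η, hPη⟩ (fun _ ih => ⟨g ih.1 ih.2, hg1 ih.1 ih.2⟩) n
  have hch0 : (ch 0).1 = η := rfl
  have hchlen : ∀ n, (ch n).1.length = η.length + n := by
    intro n
    induction n with
    | zero => rfl
    | succ n ih =>
      show (g (ch n).1 (ch n).2).length = _
      rw [hg2 (ch n).1 (ch n).2, ih]; ring
  have hchpre : ∀ m n, m ≤ n → (ch m).1 <+: (ch n).1 := by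
    intro m n h
    induction n with
    | zero => rw [Nat.le_zero.mp h]
    | succ n ih =>
      rcases Nat.lt_or_ge m (n+1) with h' | h'
      · exact (ih (by omega)).trans (hg3 (ch n).1 (ch n).2)
      · rw [le_antisymm h h']
  obtain ⟨x, hx⟩ := exists_branch_of_chain (fun n => (ch n).1)
    (by intro n; simp only [hchlen, hch0]) (fun m n h => hchpre m n h)
  simp only [hch0, initSeg_length] at hx
  have hbr : IsBranchAt p η x := by
    constructor
    · rw [hx η.length (le_refl _), Nat.sub_self, hch0]
    · intro n hn
      rw [hx n hn]
      exact (ch (n - η.length)).2.1.1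
  obtain ⟨n, hn⟩ := hA.2 x hbr
  have hηn : η.length ≤ n := by
    have := (hA.prefix_mem hn).length_le
    rwa [initSeg_length] at this
  rw [hx n hηn] at hn
  have hτ := (ch (n - η.length + 1)).2.1
  have hpre2 : (ch (n - η.length)).1 <+: (ch (n - η.length + 1)).1 :=
    hchpre (n - η.length) (n - η.length + 1) (Nat.le_succ _)
  refine hτ.2.2 (ch (n - η.length)).1 (ch (n - η.length)).2.1.2.1 hpre2 (fun hc => ?_) hn
  have h1 := hchlen (n - η.length)
  have h2 := hchlen (n - η.length + 1)
  rw [hc] at h1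
  omega
lemma Bset_rec {p : Cond T} {η : List ℕ} {A : Set (List ℕ)}
    (hA : IsFrontAt p η A) (hη : η ∈ p.tree) {P : List ℕ → Prop}
    (hbase : ∀ ρ ∈ Bset p η A, ρ ∈ A → P ρ)
    (hstep : ∀ ρ ∈ Bset p η A, ρ ∉ A → (∀ ν ∈ (p.c ρ).pos, ν ∈ Bset p η A ∧ P ν) → P ρ) :
    ∀ ρ ∈ Bset p η A, P ρ := by
  have hfin := Bset_finite hA hη
  obtain ⟨N, hN⟩ : ∃ N, ∀ ρ ∈ Bset p η A, ρ.length ≤ N := by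
    obtain ⟨N, hN⟩ := (hfin.image List.length).bddAbove
    exact ⟨N, fun ρ hρ => hN ⟨ρ, hρ, rfl⟩⟩
  suffices h : ∀ k ρ, ρ ∈ Bset p η A → N + 1 - ρ.length ≤ k → P ρ from
    fun ρ hρ => h (N+1) ρ hρ (by omega)
  intro k
  induction k with
  | zero => intro ρ hρ h; have := hN ρ hρ; omega
  | succ k ih =>
    intro ρ hρ h
    by_cases hρA : ρ ∈ A
    · exact hbase ρ hρ hρA
    · refine hstep ρ hρ hρA fun ν hν => ?_
      have hνB := Bset_child hρ hρA hν
      have hlen := (p.pos_sub hρ.1 hν).2.2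
      have hρN := hN ρ hρ
      exact ⟨hνB, ih ν hνB (by omega)⟩

-- ## The canonical measure functions

open Classical in
/-- one step of the downward recursion computing `μ^f_{p^{[η]},A}`, with
boundary value `1` at level `n`. -/
noncomputable def stepF (p : Cond T) (η : List ℕ) (A : Set (List ℕ)) (f : List ℕ → ℝ)
    (n : ℕ) (g : List ℕ → ℝ) : List ℕ → ℝ :=
  fun ρ => if InCone p η A ρ then
    (if ρ ∈ A then f ρ else if n ≤ ρ.length then 1 else T.F (p.c ρ) g) else 0

/-- the `n`-th approximation to `μ^f_{p^{[η]},A}` -/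
noncomputable def apx (p : Cond T) (η : List ℕ) (A : Set (List ℕ)) (f : List ℕ → ℝ)
    (n : ℕ) : List ℕ → ℝ :=
  (stepF p η A f n)^[n + 2] (fun _ => 0)

/-- the canonical function `μ^f_{p^{[η]},A}` -/
noncomputable def vF (p : Cond T) (η : List ℕ) (A : Set (List ℕ)) (f : List ℕ → ℝ) :
    List ℕ → ℝ :=
  fun ρ => ⨅ n : ℕ, apx p η A f n ρ

lemma inCone_of_A {p : Cond T} {η : List ℕ} {A : Set (List ℕ)} (hA : IsFrontAt p η A)
    {ρ : List ℕ} (h : ρ ∈ A) : InCone p η A ρ :=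
  ⟨hA.tree_mem h, hA.prefix_mem h, ρ, h, List.prefix_refl _⟩

lemma pos_length_of_tree {p : Cond T} {ρ ν : List ℕ} (hρ : ρ ∈ p.tree)
    (hν : ν ∈ (p.c ρ).pos) : ν.length = ρ.length + 1 := (p.pos_sub hρ hν).2.2

variable {p : Cond T} {η : List ℕ} {A : Set (List ℕ)} {f : List ℕ → ℝ}

lemma stepF_stab (hG : T.Good) (n : ℕ) :
    ∀ k ρ, n ≤ ρ.length + k →
      (stepF p η A f n)^[k + 1] (fun _ => 0) ρ = (stepF p η A f n)^[k + 2] (fun _ => 0) ρ := by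
  intro k
  induction k with
  | zero =>
    intro ρ hρ
    have e1 := congrFun (Function.iterate_succ_apply' (stepF p η A f n) 0 (fun _ => 0)) ρ
    have e2 := congrFun (Function.iterate_succ_apply' (stepF p η A f n) 1 (fun _ => 0)) ρ
    rw [show (0:ℕ)+1 = 1 from rfl, show (0:ℕ)+2 = 1+1 from rfl, e2]
    rw [show (1:ℕ) = 0+1 from rfl, e1]
    show stepF p η A f n _ ρ = stepF p η A f n _ ρ
    unfold stepF
    have h3 : n ≤ ρ.length := by omega
    by_cases h1 : InCone p η A ρ
    · by_cases h2 : ρ ∈ A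
      · simp [h1, h2]
      · simp [h1, h2, h3]
    · simp [h1]
  | succ k ih =>
    intro ρ hρ
    have e1 := congrFun (Function.iterate_succ_apply' (stepF p η A f n) (k+1) (fun _ => 0)) ρ
    have e2 := congrFun (Function.iterate_succ_apply' (stepF p η A f n) (k+2) (fun _ => 0)) ρ
    rw [show k+1+1 = k+2 from rfl, show k+1+2 = k+2+1 from rfl, e2,
      show k+2 = k+1+1 from rfl, e1]
    show stepF p η A f n _ ρ = stepF p η A f n _ ρ
    unfold stepF
    by_cases h1 : InCone p η A ρ
    · by_cases h2 : ρ ∈ A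
      · simp [h1, h2]
      · by_cases h3 : n ≤ ρ.length
        · simp [h1, h2, h3]
        · simp only [h1, h2, h3, if_true, if_false, ite_false, ite_true]
          refine hG.F_congr _ _ _ fun ν hν => ?_
          have hν' := pos_length_of_tree h1.1 hν
          exact ih ν (by omega)
    · simp [h1]
lemma apx_spec (hG : T.Good) (n : ℕ) (ρ : List ℕ) :
    apx p η A f n ρ = stepF p η A f n (apx p η A f n) ρ := by
  have h1 := stepF_stab (p := p) (η := η) (A := A) (f := f) hG n (n+1) ρ (by omega)
  have e2 := congrFun (Function.iterate_succ_apply' (stepF p η A f n) (n+2) (fun _ => 0)) ρ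
  unfold apx
  rw [show n+1+2 = n+2+1 from rfl] at h1
  rw [show n+1+1 = n+2 from rfl] at h1
  rw [h1, e2]

lemma apx_off (hG : T.Good) (n : ℕ) {ρ : List ℕ} (h : ¬ InCone p η A ρ) :
    apx p η A f n ρ = 0 := by
  rw [apx_spec hG]; unfold stepF; simp [h]

lemma apx_A (hG : T.Good) (hA : IsFrontAt p η A) (n : ℕ) {ρ : List ℕ} (h : ρ ∈ A) :
    apx p η A f n ρ = f ρ := by
  rw [apx_spec hG]; unfold stepF; simp [inCone_of_A hA h, h]

lemma apx_high (hG : T.Good) (n : ℕ) {ρ : List ℕ} (h1 : InCone p η A ρ) (h2 : ρ ∉ A)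
    (h3 : n ≤ ρ.length) : apx p η A f n ρ = 1 := by
  rw [apx_spec hG]; unfold stepF; simp [h1, h2, h3]

lemma apx_interior (hG : T.Good) (n : ℕ) {ρ : List ℕ} (h1 : InCone p η A ρ) (h2 : ρ ∉ A)
    (h3 : ρ.length < n) : apx p η A f n ρ = T.F (p.c ρ) (apx p η A f n) := by
  rw [apx_spec hG]; unfold stepF; simp [h1, h2, Nat.not_le.mpr h3]

lemma iter_mem (hG : T.Good) (hf : ∀ ν, f ν ∈ Set.Icc (0:ℝ) 1) (n : ℕ) :
    ∀ k ρ, (stepF p η A f n)^[k] (fun _ => 0) ρ ∈ Set.Icc (0:ℝ) 1 := by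
  intro k
  induction k with
  | zero => intro ρ; exact ⟨le_refl _, zero_le_one⟩
  | succ k ih =>
    intro ρ
    rw [congrFun (Function.iterate_succ_apply' _ _ _) ρ]
    show stepF p η A f n _ ρ ∈ _
    unfold stepF
    by_cases h1 : InCone p η A ρ
    · by_cases h2 : ρ ∈ A
      · simpa [h1, h2] using hf ρ
      · by_cases h3 : n ≤ ρ.length
        · simp [h1, h2, h3]
        · simp only [h1, h2, h3, if_true, if_false, ite_false, ite_true]
          exact hG.F_mem _ _ fun ν _ => ih ν
    · simp [h1]

lemma apx_mem (hG : T.Good) (hf : ∀ ν, f ν ∈ Set.Icc (0:ℝ) 1) (n : ℕ) (ρ : List ℕ) :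
    apx p η A f n ρ ∈ Set.Icc (0:ℝ) 1 := iter_mem hG hf n _ ρ

lemma apx_anti_succ (hG : T.Good) (hN : T.Nice) (hf : ∀ ν, f ν ∈ Set.Icc (0:ℝ) 1) (n : ℕ) :
    ∀ k ρ, (stepF p η A f (n+1))^[k] (fun _ => 0) ρ ≤ (stepF p η A f n)^[k] (fun _ => 0) ρ := by
  intro k
  induction k with
  | zero => intro ρ; exact le_refl _
  | succ k ih =>
    intro ρ
    rw [congrFun (Function.iterate_succ_apply' _ _ _) ρ,
      congrFun (Function.iterate_succ_apply' _ _ _) ρ]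
    show stepF p η A f (n+1) _ ρ ≤ stepF p η A f n _ ρ
    unfold stepF
    by_cases h1 : InCone p η A ρ
    · by_cases h2 : ρ ∈ A
      · simp [h1, h2]
      · by_cases h3 : n ≤ ρ.length
        · by_cases h4 : n + 1 ≤ ρ.length
          · simp [h1, h2, h3, h4]
          · simp only [h1, h2, h3, h4, if_true, if_false, ite_false, ite_true]
            exact (hG.F_mem _ _ fun ν _ => iter_mem hG hf (n+1) k ν).2
        · have h4 : ¬ (n + 1 ≤ ρ.length) := by omega
          simp only [h1, h2, h3, h4, if_true, if_false, ite_false, ite_true]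
          exact hN.mono _ (p.c_mem ρ h1.1) _ _ (fun ν _ => iter_mem hG hf (n+1) k ν)
            (fun ν _ => iter_mem hG hf n k ν) (fun ν _ => ih ν)
    · simp [h1]

lemma apx_anti (hG : T.Good) (hN : T.Nice) (hf : ∀ ν, f ν ∈ Set.Icc (0:ℝ) 1)
    {m n : ℕ} (h : m ≤ n) (ρ : List ℕ) : apx p η A f n ρ ≤ apx p η A f m ρ := by
  induction n with
  | zero => rw [Nat.le_zero.mp h]
  | succ n ih =>
    rcases Nat.lt_or_ge m (n+1) with h' | h'
    · refine le_trans ?_ (ih (by omega))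
      unfold apx
      calc (stepF p η A f (n+1))^[n+1+2] (fun _ => 0) ρ
          ≤ (stepF p η A f n)^[n+1+2] (fun _ => 0) ρ := apx_anti_succ hG hN hf n _ ρ
        _ = (stepF p η A f n)^[n+2] (fun _ => 0) ρ := by
            have := stepF_stab (p := p) (η := η) (A := A) (f := f) hG n (n+1) ρ (by omega)
            rw [show n+1+1 = n+2 from rfl, show n+1+2 = n+1+2 from rfl] at this
            exact this.symm
    · rw [le_antisymm h h']

lemma apx_mono_f (hG : T.Good) (hN : T.Nice) {f' : List ℕ → ℝ}
    (hf : ∀ ν, f ν ∈ Set.Icc (0:ℝ) 1) (hf' : ∀ ν, f' ν ∈ Set.Icc (0:ℝ) 1)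
    (hle : ∀ ν, f ν ≤ f' ν) (n : ℕ) :
    ∀ k ρ, (stepF p η A f n)^[k] (fun _ => 0) ρ ≤ (stepF p η A f' n)^[k] (fun _ => 0) ρ := by
  intro k
  induction k with
  | zero => intro ρ; exact le_refl _
  | succ k ih =>
    intro ρ
    rw [congrFun (Function.iterate_succ_apply' _ _ _) ρ,
      congrFun (Function.iterate_succ_apply' _ _ _) ρ]
    show stepF p η A f n _ ρ ≤ stepF p η A f' n _ ρ
    unfold stepF
    by_cases h1 : InCone p η A ρ
    · by_cases h2 : ρ ∈ A
      · simp only [h1, h2, if_true, ite_true]; exact hle ρ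
      · by_cases h3 : n ≤ ρ.length
        · simp [h1, h2, h3]
        · simp only [h1, h2, h3, if_true, if_false, ite_false, ite_true]
          exact hN.mono _ (p.c_mem ρ h1.1) _ _ (fun ν _ => iter_mem hG hf n k ν)
            (fun ν _ => iter_mem hG hf' n k ν) (fun ν _ => ih ν)
    · simp [h1]

lemma apx_congr_f (hG : T.Good) {f' : List ℕ → ℝ}
    (hff' : ∀ a ∈ A, f a = f' a) (n : ℕ) :
    ∀ k ρ, (stepF p η A f n)^[k] (fun _ => 0) ρ = (stepF p η A f' n)^[k] (fun _ => 0) ρ := by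
  intro k
  induction k with
  | zero => intro ρ; rfl
  | succ k ih =>
    intro ρ
    rw [congrFun (Function.iterate_succ_apply' _ _ _) ρ,
      congrFun (Function.iterate_succ_apply' _ _ _) ρ]
    show stepF p η A f n _ ρ = stepF p η A f' n _ ρ
    unfold stepF
    by_cases h1 : InCone p η A ρ
    · by_cases h2 : ρ ∈ A
      · simp only [h1, h2, if_true, ite_true]; exact hff' ρ h2
      · by_cases h3 : n ≤ ρ.length
        · simp [h1, h2, h3]
        · simp only [h1, h2, h3, if_true, if_false, ite_false, ite_true]
          exact hG.F_congr _ _ _ fun ν _ => ih ν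
    · simp [h1]
lemma apx_bdd (hG : T.Good) (hf : ∀ ν, f ν ∈ Set.Icc (0:ℝ) 1) (ρ : List ℕ) :
    BddBelow (Set.range fun n => apx p η A f n ρ) := by
  refine ⟨0, ?_⟩
  rintro x ⟨n, rfl⟩
  exact (apx_mem hG hf n ρ).1

lemma vF_le_apx (hG : T.Good) (hf : ∀ ν, f ν ∈ Set.Icc (0:ℝ) 1) (n : ℕ) (ρ : List ℕ) :
    vF p η A f ρ ≤ apx p η A f n ρ := ciInf_le (apx_bdd hG hf ρ) n

lemma vF_mem (hG : T.Good) (hf : ∀ ν, f ν ∈ Set.Icc (0:ℝ) 1) (ρ : List ℕ) :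
    vF p η A f ρ ∈ Set.Icc (0:ℝ) 1 :=
  ⟨le_ciInf fun n => (apx_mem hG hf n ρ).1,
   (vF_le_apx hG hf 0 ρ).trans (apx_mem hG hf 0 ρ).2⟩

lemma vF_off (hG : T.Good) {ρ : List ℕ} (h : ¬ InCone p η A ρ) : vF p η A f ρ = 0 := by
  unfold vF
  rw [funext fun n => apx_off (p := p) (η := η) (A := A) (f := f) hG n h]
  exact ciInf_const

lemma vF_A (hG : T.Good) (hA : IsFrontAt p η A) {ρ : List ℕ} (h : ρ ∈ A) :
    vF p η A f ρ = f ρ := by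
  unfold vF
  rw [funext fun n => apx_A (p := p) (η := η) (A := A) (f := f) hG hA n h]
  exact ciInf_const

lemma vF_eq (hG : T.Good) (hN : T.Nice) (hf : ∀ ν, f ν ∈ Set.Icc (0:ℝ) 1)
    {ρ : List ℕ} (h1 : InCone p η A ρ) (h2 : ρ ∉ A) :
    vF p η A f ρ = T.F (p.c ρ) (vF p η A f) := by
  have htree := h1.1
  have hvmem : ∀ ν, vF p η A f ν ∈ Set.Icc (0:ℝ) 1 := vF_mem hG hf
  have hge : T.F (p.c ρ) (vF p η A f) ≤ vF p η A f ρ := by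
    refine le_ciInf fun n => ?_
    rcases le_or_gt n ρ.length with h3 | h3
    · rw [apx_high hG n h1 h2 h3]
      exact (hG.F_mem _ _ fun ν _ => hvmem ν).2
    · rw [apx_interior hG n h1 h2 h3]
      exact hN.mono _ (p.c_mem ρ htree) _ _ (fun ν _ => hvmem ν)
        (fun ν _ => apx_mem hG hf n ν) (fun ν _ => vF_le_apx hG hf n ν)
  have hle : vF p η A f ρ ≤ T.F (p.c ρ) (vF p η A f) := by
    refine le_of_forall_pos_le_add fun ε hε => ?_
    obtain ⟨r', hr'1, hr'2⟩ := hN.approx _ (p.c_mem ρ htree) _ (fun ν _ => hvmem ν) ε hε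
    have hch : ∀ ν ∈ (p.c ρ).pos, ∃ n, apx p η A f n ν < r' ν := by
      intro ν hν
      have h4 : vF p η A f ν < r' ν := hr'1 ν hν
      exact exists_lt_of_ciInf_lt h4
    choose g hg using hch
    set N := ((p.c ρ).pos.attach.sup fun ν => g ν.1 ν.2) + ρ.length + 1 with hNdef
    have hNlt : ρ.length < N := by omega
    have key : ∀ ν ∈ (p.c ρ).pos, vF p η A f ν ≤ apx p η A f N ν ∧ apx p η A f N ν < r' ν := by
      intro ν hν
      refine ⟨vF_le_apx hG hf N ν, lt_of_le_of_lt (apx_anti hG hN hf ?_ ν) (hg ν hν)⟩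
      have : g ν hν ≤ (p.c ρ).pos.attach.sup fun ν => g ν.1 ν.2 :=
        Finset.le_sup (f := fun ν => g ν.1 ν.2) (Finset.mem_attach _ ⟨ν, hν⟩)
      omega
    have hρN : vF p η A f ρ ≤ apx p η A f N ρ := vF_le_apx hG hf N ρ
    rw [apx_interior hG N h1 h2 hNlt] at hρN
    refine hρN.trans (le_of_lt (hr'2 _ (fun ν _ => apx_mem hG hf N ν)
      fun ν hν => ⟨(key ν hν).1, (key ν hν).2⟩))
  exact le_antisymm hle hge

lemma vF_isMuAt (hG : T.Good) (hN : T.Nice) (hA : IsFrontAt p η A)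
    (hf : ∀ ν, f ν ∈ Set.Icc (0:ℝ) 1) : IsMuAt p η A f (vF p η A f) :=
  ⟨fun ρ h => vF_A hG hA h, fun ρ h1 h2 => vF_eq hG hN hf h1 h2, fun ρ h => vF_off hG h⟩

lemma vF_mono_f (hG : T.Good) (hN : T.Nice) {f' : List ℕ → ℝ}
    (hf : ∀ ν, f ν ∈ Set.Icc (0:ℝ) 1) (hf' : ∀ ν, f' ν ∈ Set.Icc (0:ℝ) 1)
    (hle : ∀ ν, f ν ≤ f' ν) (ρ : List ℕ) : vF p η A f ρ ≤ vF p η A f' ρ := by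
  unfold vF
  exact ciInf_mono (apx_bdd hG hf ρ) fun n => apx_mono_f hG hN hf hf' hle n _ ρ

lemma vF_congr_f (hG : T.Good) {f' : List ℕ → ℝ} (hff' : ∀ a ∈ A, f a = f' a) (ρ : List ℕ) :
    vF p η A f ρ = vF p η A f' ρ := by
  unfold vF
  exact congrArg _ (funext fun n => apx_congr_f hG hff' n _ ρ)

lemma vF_uniq (hG : T.Good) (hN : T.Nice) (hA : IsFrontAt p η A) (hη : η ∈ p.tree)
    (hf : ∀ ν, f ν ∈ Set.Icc (0:ℝ) 1) {m : List ℕ → ℝ} (hm : IsMuAt p η A f m) :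
    ∀ ρ ∈ Bset p η A, m ρ = vF p η A f ρ := by
  refine Bset_rec hA hη (fun ρ hρ hρA => ?_) (fun ρ hρ hρA hch => ?_)
  · rw [hm.1 ρ hρA, vF_A hG hA hρA]
  · rw [hm.2.1 ρ (Bset_inCone hA hη hρ) hρA, vF_eq hG hN hf (Bset_inCone hA hη hρ) hρA]
    exact hG.F_congr _ _ _ fun ν hν => (hch ν hν).2

lemma front_singleton (hη : η ∈ p.tree) : IsFrontAt p η {η} := by
  constructor
  · rintro ρ rfl
    exact ⟨hη, List.prefix_refl _⟩
  · intro x hx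
    exact ⟨η.length, by rw [hx.1]; rfl⟩

lemma muAt_mem_iff (hG : T.Good) (hN : T.Nice) (hη : η ∈ p.tree) (x : ℝ) :
    (x ∈ {x : ℝ | ∃ (A : Set (List ℕ)) (m : List ℕ → ℝ),
      IsFrontAt p η A ∧ IsMuAt p η A (fun _ => 1) m ∧ x = m η}) ↔
    ∃ A : Set (List ℕ), IsFrontAt p η A ∧ x = vF p η A (fun _ => 1) η := by
  constructor
  · rintro ⟨A, m, hA, hm, rfl⟩
    exact ⟨A, hA, vF_uniq hG hN hA hη (fun _ => ⟨zero_le_one, le_refl _⟩) hm η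
      (self_mem_Bset hη A)⟩
  · rintro ⟨A, hA, rfl⟩
    exact ⟨A, _, hA, vF_isMuAt hG hN hA fun _ => ⟨zero_le_one, le_refl _⟩, rfl⟩

lemma muAt_le_vF (hG : T.Good) (hN : T.Nice) (hη : η ∈ p.tree) (hA : IsFrontAt p η A) :
    muAt p η ≤ vF p η A (fun _ => 1) η := by
  refine csInf_le ⟨0, fun x hx => ?_⟩ ((muAt_mem_iff hG hN hη _).mpr ⟨A, hA, rfl⟩)
  obtain ⟨A', hA', rfl⟩ := (muAt_mem_iff hG hN hη x).mp hx
  exact (vF_mem hG (fun _ => ⟨zero_le_one, le_refl _⟩) η).1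

lemma le_muAt (hG : T.Good) (hN : T.Nice) (hη : η ∈ p.tree) {c : ℝ}
    (h : ∀ A : Set (List ℕ), IsFrontAt p η A → c ≤ vF p η A (fun _ => 1) η) :
    c ≤ muAt p η := by
  refine le_csInf ⟨1, ?_⟩ fun x hx => ?_
  · refine (muAt_mem_iff hG hN hη 1).mpr ⟨{η}, front_singleton hη, ?_⟩
    rw [vF_A hG (front_singleton hη) rfl]
  · obtain ⟨A', hA', rfl⟩ := (muAt_mem_iff hG hN hη x).mp hx
    exact h A' hA'

lemma muAt_mem (hG : T.Good) (hN : T.Nice) (hη : η ∈ p.tree) :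
    muAt p η ∈ Set.Icc (0:ℝ) 1 := by
  constructor
  · exact le_muAt hG hN hη fun A hA => (vF_mem hG (fun _ => ⟨zero_le_one, le_refl _⟩) η).1
  · refine le_trans (muAt_le_vF hG hN hη (front_singleton hη)) ?_
    rw [vF_A hG (front_singleton hη) rfl]
/-- truncated `muAt`, used as a boundary function -/
noncomputable def muT (p : Cond T) : List ℕ → ℝ := fun ν => max 0 (min 1 (muAt p ν))

lemma muT_mem (p : Cond T) (ν : List ℕ) : muT p ν ∈ Set.Icc (0:ℝ) 1 :=
  ⟨le_max_left _ _, max_le (zero_le_one) (min_le_left _ _)⟩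

lemma muT_eq (hG : T.Good) (hN : T.Nice) {p : Cond T} {ν : List ℕ} (hν : ν ∈ p.tree) :
    muT p ν = muAt p ν := by
  obtain ⟨h1, h2⟩ := muAt_mem hG hN hν
  unfold muT
  rw [min_eq_right h2, max_eq_right h1]

/-- locality : the canonical functions for two fronts which agree above `a`
agree above `a`. -/
lemma vF_local (hG : T.Good) {p : Cond T} {η a : List ℕ} {D D' : Set (List ℕ)}
    {f : List ℕ → ℝ} (hηa : η <+: a)
    (hee : ∀ d, d ∈ D' ↔ (d ∈ D ∧ a <+: d)) :
    ∀ ρ, a <+: ρ → vF p η D f ρ = vF p a D' f ρ := by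
  have hcone : ∀ ρ, a <+: ρ → (InCone p η D ρ ↔ InCone p a D' ρ) := by
    intro ρ haρ
    constructor
    · rintro ⟨h1, h2, ν, hν, h3⟩
      exact ⟨h1, haρ, ν, (hee ν).mpr ⟨hν, haρ.trans h3⟩, h3⟩
    · rintro ⟨h1, h2, ν, hν, h3⟩
      exact ⟨h1, hηa.trans haρ, ν, ((hee ν).mp hν).1, h3⟩
  have hmem : ∀ ρ, a <+: ρ → (ρ ∈ D ↔ ρ ∈ D') := by
    intro ρ haρ
    constructor
    · intro h; exact (hee ρ).mpr ⟨h, haρ⟩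
    · intro h; exact ((hee ρ).mp h).1
  have hiter : ∀ n k ρ, a <+: ρ →
      (stepF p η D f n)^[k] (fun _ => 0) ρ = (stepF p a D' f n)^[k] (fun _ => 0) ρ := by
    intro n k
    induction k with
    | zero => intro ρ _; rfl
    | succ k ih =>
      intro ρ haρ
      rw [congrFun (Function.iterate_succ_apply' _ _ _) ρ,
        congrFun (Function.iterate_succ_apply' _ _ _) ρ]
      show stepF p η D f n _ ρ = stepF p a D' f n _ ρ
      unfold stepF
      by_cases h1 : InCone p η D ρ
      · have h1' : InCone p a D' ρ := (hcone ρ haρ).mp h1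
        by_cases h2 : ρ ∈ D
        · simp [h1, h1', h2, (hmem ρ haρ).mp h2]
        · have h2' : ρ ∉ D' := fun h => h2 ((hmem ρ haρ).mpr h)
          by_cases h3 : n ≤ ρ.length
          · simp [h1, h1', h2, h2', h3]
          · simp only [h1, h1', h2, h2', h3, if_true, if_false, ite_false, ite_true]
            refine hG.F_congr _ _ _ fun ν hν => ?_
            exact ih ν (haρ.trans (p.pos_sub h1.1 hν).2.1)
      · have h1' : ¬ InCone p a D' ρ := fun h => h1 ((hcone ρ haρ).mpr h)
        simp [h1, h1']
  intro ρ haρ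
  unfold vF apx
  exact congrArg _ (funext fun n => hiter n _ ρ haρ)

/-- refinement : a finer front gives a smaller canonical value. -/
lemma vF_refine (hG : T.Good) (hN : T.Nice) {p : Cond T} {η : List ℕ}
    {C D : Set (List ℕ)} (hC : IsFrontAt p η C) (hD : IsFrontAt p η D)
    (hη : η ∈ p.tree) (href : ∀ d ∈ D, ∃ c ∈ C, c <+: d) :
    ∀ ρ ∈ Bset p η C, vF p η D (fun _ => 1) ρ ≤ vF p η C (fun _ => 1) ρ := by
  have h1' : ∀ ν : List ℕ, (fun _ : List ℕ => (1:ℝ)) ν ∈ Set.Icc (0:ℝ) 1 :=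
    fun _ => ⟨zero_le_one, le_refl _⟩
  refine Bset_rec hC hη (fun ρ hρ hρC => ?_) (fun ρ hρ hρC hch => ?_)
  · rw [vF_A hG hC hρC]
    exact (vF_mem hG h1' ρ).2
  · have hρD : ρ ∉ D := by
      intro h
      obtain ⟨c, hc, hcρ⟩ := href ρ h
      rcases eq_or_ne c ρ with he | he
      · exact hρC (he ▸ hc)
      · exact hρ.2.2 c (hC.prefix_mem hc) hcρ he hc
    have hcone : InCone p η D ρ := by
      obtain ⟨d, hd, hcomp⟩ := hD.hit_comparable hη hρ.1 hρ.2.1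
      rcases hcomp with h | h
      · obtain ⟨c, hc, hcd⟩ := href d hd
        have hcρ : c <+: ρ := hcd.trans h
        rcases eq_or_ne c ρ with he | he
        · exact absurd (he ▸ hc) hρC
        · exact absurd hc (hρ.2.2 c (hC.prefix_mem hc) hcρ he)
      · exact ⟨hρ.1, hρ.2.1, d, hd, h⟩
    rw [vF_eq hG hN h1' hcone hρD, vF_eq hG hN h1' (Bset_inCone hC hη hρ) hρC]
    exact hN.mono _ (p.c_mem ρ hρ.1) _ _ (fun ν _ => vF_mem hG h1' ν)
      (fun ν _ => vF_mem hG h1' ν) (fun ν hν => (hch ν hν).2)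

/-- the common refinement of two fronts : minimal nodes above both. -/
def jointFront (p : Cond T) (η : List ℕ) (A C : Set (List ℕ)) : Set (List ℕ) :=
  {ρ | ρ ∈ p.tree ∧ η <+: ρ ∧ ((∃ a ∈ A, a <+: ρ) ∧ (∃ c ∈ C, c <+: ρ)) ∧
    ∀ σ, η <+: σ → σ <+: ρ → σ ≠ ρ → ¬((∃ a ∈ A, a <+: σ) ∧ (∃ c ∈ C, c <+: σ))}

lemma jointFront_isFront {p : Cond T} {η : List ℕ} {A C : Set (List ℕ)}
    (hA : IsFrontAt p η A) (hC : IsFrontAt p η C) :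
    IsFrontAt p η (jointFront p η A C) := by
  classical
  constructor
  · exact fun ρ hρ => ⟨hρ.1, hρ.2.1⟩
  · intro x hx
    obtain ⟨n₁, hn₁⟩ := hA.2 x hx
    obtain ⟨n₂, hn₂⟩ := hC.2 x hx
    have hP : ∃ n, (∃ a ∈ A, a <+: initSeg x n) ∧ (∃ c ∈ C, c <+: initSeg x n) := by
      refine ⟨max n₁ n₂, ⟨_, hn₁, initSeg_prefix x (le_max_left _ _)⟩,
        ⟨_, hn₂, initSeg_prefix x (le_max_right _ _)⟩⟩
    set m := Nat.find hP with hm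
    obtain ⟨⟨a, ha, haρ⟩, ⟨c, hc, hcρ⟩⟩ := Nat.find_spec hP
    have hηm : η.length ≤ m := by
      have h1 := (hA.prefix_mem ha).length_le
      have h2 := haρ.length_le
      rw [initSeg_length] at h2
      omega
    refine ⟨m, hx.2 m hηm, ?_, ⟨⟨a, ha, haρ⟩, ⟨c, hc, hcρ⟩⟩, ?_⟩
    · rw [← hx.1]; exact initSeg_prefix x hηm
    · intro σ hs1 hs2 hs3 hs4
      have hσ : σ = initSeg x σ.length := prefix_initSeg hs2
      have hσlen : σ.length < m := by
        have := strict_prefix_length hs2 hs3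
        rwa [initSeg_length] at this
      exact Nat.find_min hP hσlen (hσ ▸ hs4)

lemma jointFront_refines {p : Cond T} {η : List ℕ} {A C : Set (List ℕ)} :
    ∀ d ∈ jointFront p η A C, ∃ c ∈ C, c <+: d := fun _ hd => hd.2.2.1.2

lemma jointFront_refines_left {p : Cond T} {η : List ℕ} {A C : Set (List ℕ)} :
    ∀ d ∈ jointFront p η A C, ∃ a ∈ A, a <+: d := fun _ hd => hd.2.2.1.1
lemma frontA_antichain {p : Cond T} {η : List ℕ} {A : Set (List ℕ)}
    (hA : IsFrontAt p η A) {a a' : List ℕ} (ha : a ∈ A) (ha' : a' ∈ A ∩ Bset p η A)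
    (hpre : a <+: a') : a = a' := by
  by_contra hne
  exact ha'.2.2.2 a (hA.prefix_mem ha) hpre hne ha

lemma front_above {p : Cond T} {η : List ℕ} {A : Set (List ℕ)}
    (hA : IsFrontAt p η A) (hη : η ∈ p.tree) {a : List ℕ}
    (ha : a ∈ A ∩ Bset p η A) {D : Set (List ℕ)} (hD : IsFrontAt p η D)
    (hDA : ∀ d ∈ D, ∃ a' ∈ A, a' <+: d) :
    IsFrontAt p a {d | d ∈ D ∧ a <+: d} := by
  constructor
  · exact fun d hd => ⟨hD.tree_mem hd.1, hd.2⟩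
  · intro y hy
    have hy' : IsBranchAt p η y :=
      isBranchAt_of_prefix p hη ha.2.1 (hA.prefix_mem ha.1) hy
    obtain ⟨n, hn⟩ := hD.2 y hy'
    refine ⟨n, hn, ?_⟩
    have han : a.length ≤ n ∨ a = initSeg y n ∨ initSeg y n <+: a := by
      rcases Nat.le_total a.length n with h | h
      · exact Or.inl h
      · right; right
        rw [← hy.1]; exact initSeg_prefix y h
    rcases han with h | h | h
    · rw [← hy.1]; exact initSeg_prefix y h
    · exact h ▸ List.prefix_refl _
    · rcases eq_or_ne (initSeg y n) a with he | he
      · exact he ▸ List.prefix_refl _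
      · obtain ⟨a', ha', ha'd⟩ := hDA _ hn
        have ha'a : a' <+: a := ha'd.trans h
        have hne : a' ≠ a := by
          intro hc; subst hc
          have h1 := ha'd.length_le
          have h2 := strict_prefix_length h he
          omega
        exact absurd ha' (ha.2.2.2 a' (hA.prefix_mem ha') ha'a hne)
  
lemma one_Icc : ∀ ν : List ℕ, (fun _ : List ℕ => (1:ℝ)) ν ∈ Set.Icc (0:ℝ) 1 :=
  fun _ => ⟨zero_le_one, le_refl _⟩

/-- Direction 1 : the canonical value of any front dominates the `μ`-recursion over `A`. -/
lemma dir1 (hG : T.Good) (hN : T.Nice) {p : Cond T} {η : List ℕ} {A : Set (List ℕ)}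
    (hA : IsFrontAt p η A) (hη : η ∈ p.tree) {C : Set (List ℕ)} (hC : IsFrontAt p η C) :
    vF p η A (muT p) η ≤ vF p η C (fun _ => 1) η := by
  set D := jointFront p η A C with hDdef
  have hD := jointFront_isFront hA hC
  have step1 : vF p η D (fun _ => 1) η ≤ vF p η C (fun _ => 1) η :=
    vF_refine hG hN hC hD hη jointFront_refines η (self_mem_Bset hη C)
  suffices h : ∀ ρ ∈ Bset p η A, vF p η A (muT p) ρ ≤ vF p η D (fun _ => 1) ρ from
    le_trans (h η (self_mem_Bset hη A)) step1
  refine Bset_rec hA hη (fun a haB haA => ?_) (fun ρ hρ hρA hch => ?_)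
  · have hD' : IsFrontAt p a {d | d ∈ D ∧ a <+: d} :=
      front_above hA hη ⟨haA, haB⟩ hD jointFront_refines_left
    have hloc : vF p η D (fun _ => 1) a = vF p a {d | d ∈ D ∧ a <+: d} (fun _ => 1) a :=
      vF_local hG (hA.prefix_mem haA) (fun d => Iff.rfl) a (List.prefix_refl _)
    rw [vF_A hG hA haA, hloc, muT_eq hG hN haB.1]
    exact muAt_le_vF hG hN haB.1 hD'
  · have hρD : ρ ∉ D := by
      intro h
      obtain ⟨a, ha, haρ⟩ := jointFront_refines_left ρ h
      rcases eq_or_ne a ρ with he | he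
      · exact hρA (he ▸ ha)
      · exact hρ.2.2 a (hA.prefix_mem ha) haρ he ha
    have hcone : InCone p η D ρ := by
      obtain ⟨d, hd, hcomp⟩ := hD.hit_comparable hη hρ.1 hρ.2.1
      rcases hcomp with h | h
      · obtain ⟨a, ha, had⟩ := jointFront_refines_left d hd
        have haρ : a <+: ρ := had.trans h
        rcases eq_or_ne a ρ with he | he
        · exact absurd (he ▸ ha) hρA
        · exact absurd ha (hρ.2.2 a (hA.prefix_mem ha) haρ he)
      · exact ⟨hρ.1, hρ.2.1, d, hd, h⟩
    rw [vF_eq hG hN (muT_mem p) (Bset_inCone hA hη hρ) hρA, vF_eq hG hN one_Icc hcone hρD]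
    exact hN.mono _ (p.c_mem ρ hρ.1) _ _ (fun ν _ => vF_mem hG (muT_mem p) ν)
      (fun ν _ => vF_mem hG one_Icc ν) (fun ν hν => (hch ν hν).2)

lemma dir1' (hG : T.Good) (hN : T.Nice) {p : Cond T} {η : List ℕ} {A : Set (List ℕ)}
    (hA : IsFrontAt p η A) (hη : η ∈ p.tree) :
    vF p η A (muT p) η ≤ muAt p η :=
  le_muAt hG hN hη fun C hC => dir1 hG hN hA hη hC
/-- continuity of the recursion in the boundary values, via axiom (δ). -/
lemma vF_cont (hG : T.Good) (hN : T.Nice) {p : Cond T} {η : List ℕ} {A : Set (List ℕ)}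
    {f : List ℕ → ℝ} (hA : IsFrontAt p η A) (hη : η ∈ p.tree)
    (hf : ∀ ν, f ν ∈ Set.Icc (0:ℝ) 1) :
    ∀ ρ ∈ Bset p η A, ∀ ε : ℝ, 0 < ε → ∃ δ : ℝ, 0 < δ ∧ ∀ f' : List ℕ → ℝ,
      (∀ ν, f' ν ∈ Set.Icc (0:ℝ) 1) → (∀ ν, f ν ≤ f' ν) → (∀ ν, f' ν ≤ f ν + δ) →
      vF p η A f' ρ < vF p η A f ρ + ε := by
  refine Bset_rec hA hη (fun a haB haA => ?_) (fun ρ hρ hρA hch => ?_)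
  · intro ε hε
    refine ⟨ε/2, by linarith, fun f' hf'1 hf'2 hf'3 => ?_⟩
    rw [vF_A hG hA haA, vF_A hG hA haA]
    have := hf'3 a
    linarith
  · intro ε hε
    have htree := hρ.1
    have hvmem : ∀ ν, vF p η A f ν ∈ Set.Icc (0:ℝ) 1 := vF_mem hG hf
    obtain ⟨r', hr'1, hr'2⟩ := hN.approx _ (p.c_mem ρ htree) _ (fun ν _ => hvmem ν) ε hε
    have hex : ∀ ν ∈ (p.c ρ).pos, ∃ δ : ℝ, 0 < δ ∧ ∀ f' : List ℕ → ℝ,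
        (∀ ν', f' ν' ∈ Set.Icc (0:ℝ) 1) → (∀ ν', f ν' ≤ f' ν') → (∀ ν', f' ν' ≤ f ν' + δ) →
        vF p η A f' ν < r' ν := by
      intro ν hν
      have hpos : 0 < r' ν - vF p η A f ν := by
        have := hr'1 ν hν; linarith
      obtain ⟨δ, hδ, hδ2⟩ := (hch ν hν).2 _ hpos
      refine ⟨δ, hδ, fun f' h1 h2 h3 => ?_⟩
      have := hδ2 f' h1 h2 h3
      linarith
    choose g hg1 hg2 using hex
    have hne : ((p.c ρ).pos.attach).Nonempty := Finset.attach_nonempty_iff.mpr (p.c ρ).pos_ne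
    set δ := (p.c ρ).pos.attach.inf' hne fun ν => g ν.1 ν.2 with hδdef
    have hδpos : 0 < δ := by
      rw [hδdef, Finset.lt_inf'_iff]
      exact fun ν _ => hg1 ν.1 ν.2
    refine ⟨δ, hδpos, fun f' hf'1 hf'2 hf'3 => ?_⟩
    have hkey : ∀ ν ∈ (p.c ρ).pos,
        vF p η A f ν ≤ vF p η A f' ν ∧ vF p η A f' ν < r' ν := by
      intro ν hν
      refine ⟨vF_mono_f hG hN hf hf'1 hf'2 ν, ?_⟩
      refine hg2 ν hν f' hf'1 hf'2 fun ν' => ?_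
      have hle : δ ≤ g ν hν := Finset.inf'_le _ (Finset.mem_attach _ ⟨ν, hν⟩)
      have := hf'3 ν'
      linarith
    have hco := Bset_inCone hA hη hρ
    rw [vF_eq hG hN hf hco hρA, vF_eq hG hN hf'1 hco hρA]
    exact hr'2 _ (fun ν _ => vF_mem hG hf'1 ν) fun ν hν => hkey ν hν

/-- Direction 2 : fronts with canonical value close to the `μ`-recursion over `A`. -/
lemma dir2 (hG : T.Good) (hN : T.Nice) {p : Cond T} {η : List ℕ} {A : Set (List ℕ)}
    (hA : IsFrontAt p η A) (hη : η ∈ p.tree) {ε : ℝ} (hε : 0 < ε) :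
    ∃ C : Set (List ℕ), IsFrontAt p η C ∧
      vF p η C (fun _ => 1) η < vF p η A (muT p) η + ε := by
  classical
  obtain ⟨δ, hδ, hcont⟩ := vF_cont hG hN hA hη (muT_mem p) η (self_mem_Bset hη A) ε hε
  have hex : ∀ a ∈ A, ∃ Ca : Set (List ℕ), IsFrontAt p a Ca ∧
      vF p a Ca (fun _ => 1) a < muAt p a + δ := by
    intro a ha
    have hatree := hA.tree_mem ha
    have hne : {x : ℝ | ∃ (A' : Set (List ℕ)) (m : List ℕ → ℝ),
        IsFrontAt p a A' ∧ IsMuAt p a A' (fun _ => 1) m ∧ x = m a}.Nonempty := by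
      refine ⟨vF p a {a} (fun _ => 1) a, (muAt_mem_iff hG hN hatree _).mpr
        ⟨{a}, front_singleton hatree, rfl⟩⟩
    obtain ⟨x, hx, hxlt⟩ := exists_lt_of_csInf_lt hne (by linarith : muAt p a < muAt p a + δ)
    obtain ⟨A', hA', rfl⟩ := (muAt_mem_iff hG hN hatree x).mp hx
    exact ⟨A', hA', hxlt⟩
  choose Ca hCa1 hCa2 using hex
  set C := {c : List ℕ | ∃ (a : List ℕ) (h : a ∈ A), a ∈ Bset p η A ∧ c ∈ Ca a h} with hCdef
  have hCfront : IsFrontAt p η C := by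
    constructor
    · rintro c ⟨a, ha, haB, hc⟩
      exact ⟨((hCa1 a ha).1 c hc).1, (hA.prefix_mem ha).trans ((hCa1 a ha).1 c hc).2⟩
    · intro x hx
      obtain ⟨n, hn, hnB⟩ := hA.first_hit hx
      have hxa : IsBranchAt p (initSeg x n) x := by
        refine ⟨by rw [initSeg_length], fun m hm => hx.2 m ?_⟩
        rw [initSeg_length] at hm
        have : η.length ≤ n := by
          have := (hA.prefix_mem hn).length_le
          rwa [initSeg_length] at this
        omega
      obtain ⟨k, hk⟩ := (hCa1 _ hn).2 x hxa
      exact ⟨k, _, hn, hnB, hk⟩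
  have hf' : ∀ ν, (fun ν => min (muT p ν + δ) 1) ν ∈ Set.Icc (0:ℝ) 1 := by
    intro ν
    constructor
    · refine le_min ?_ zero_le_one
      have := (muT_mem p ν).1; linarith
    · exact min_le_right _ _
  have hclaim : ∀ ρ ∈ Bset p η A,
      vF p η C (fun _ => 1) ρ ≤ vF p η A (fun ν => min (muT p ν + δ) 1) ρ := by
    refine Bset_rec hA hη (fun a haB haA => ?_) (fun ρ hρ hρA hch => ?_)
    · have hee : ∀ d, d ∈ Ca a haA ↔ (d ∈ C ∧ a <+: d) := by
        intro d
        constructor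
        · intro hd
          exact ⟨⟨a, haA, haB, hd⟩, ((hCa1 a haA).1 d hd).2⟩
        · rintro ⟨⟨a', ha', ha'B, hd⟩, had⟩
          have ha'd : a' <+: d := ((hCa1 a' ha').1 d hd).2
          have : a = a' := by
            rcases prefix_comparable had ha'd with h | h
            · exact frontA_antichain hA haA ⟨ha', ha'B⟩ h
            · exact (frontA_antichain hA ha' ⟨haA, haB⟩ h).symm
          subst this
          exact hd
      have hloc : vF p η C (fun _ => 1) a = vF p a (Ca a haA) (fun _ => 1) a :=
        vF_local hG (hA.prefix_mem haA) hee a (List.prefix_refl _)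
      rw [hloc, vF_A hG hA haA]
      refine le_min ?_ (vF_mem hG one_Icc a).2
      rw [muT_eq hG hN haB.1]
      exact (hCa2 a haA).le
    · have hρC : ρ ∉ C := by
        rintro ⟨a, ha, haB, hρa⟩
        have haρ : a <+: ρ := ((hCa1 a ha).1 ρ hρa).2
        rcases eq_or_ne a ρ with he | he
        · exact hρA (he ▸ ha)
        · exact hρ.2.2 a (hA.prefix_mem ha) haρ he ha
      have hcone : InCone p η C ρ := by
        obtain ⟨x0, hx0⟩ := exists_branchAt p hρ.1
        have hxη : IsBranchAt p η x0 := isBranchAt_of_prefix p hη hρ.1 hρ.2.1 hx0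
        obtain ⟨n, hn, hnB⟩ := hA.first_hit hxη
        have hρx : ρ = initSeg x0 ρ.length := hx0.1.symm
        have hρn : ρ <+: initSeg x0 n := by
          rcases Nat.lt_or_ge n ρ.length with h | h
          · exfalso
            have hσρ : initSeg x0 n <+: ρ := by
              rw [hρx]; exact initSeg_prefix x0 h.le
            have hσne : initSeg x0 n ≠ ρ := by
              intro hc
              have := initSeg_length x0 n
              rw [hc] at this; omega
            exact hρ.2.2 _ (hA.prefix_mem hn) hσρ hσne hn
          · rw [hρx]; exact initSeg_prefix x0 h
        have hxa : IsBranchAt p (initSeg x0 n) x0 := by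
          refine ⟨by rw [initSeg_length], fun m hm => hxη.2 m ?_⟩
          rw [initSeg_length] at hm
          have := (hA.prefix_mem hn).length_le
          rw [initSeg_length] at this
          omega
        obtain ⟨k, hk⟩ := (hCa1 _ hn).2 x0 hxa
        refine ⟨hρ.1, hρ.2.1, initSeg x0 k, ⟨_, hn, hnB, hk⟩, ?_⟩
        exact hρn.trans ((hCa1 _ hn).1 _ hk).2
      rw [vF_eq hG hN one_Icc hcone hρC,
        vF_eq hG hN hf' (Bset_inCone hA hη hρ) hρA]
      exact hN.mono _ (p.c_mem ρ hρ.1) _ _ (fun ν _ => vF_mem hG one_Icc ν)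
        (fun ν _ => vF_mem hG hf' ν) (fun ν hν => (hch ν hν).2)
  refine ⟨C, hCfront, lt_of_le_of_lt (hclaim η (self_mem_Bset hη A)) ?_⟩
  refine hcont _ hf' (fun ν => le_min (by linarith [(muT_mem p ν).1, hδ] ) (muT_mem p ν).2)
    fun ν => min_le_left _ _
  
/-- the `μ`-recursion formula over any front. -/
lemma muAt_eq_vF (hG : T.Good) (hN : T.Nice) {p : Cond T} {η : List ℕ} {A : Set (List ℕ)}
    (hA : IsFrontAt p η A) (hη : η ∈ p.tree) :
    muAt p η = vF p η A (muT p) η := by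
  refine le_antisymm ?_ (dir1' hG hN hA hη)
  refine le_of_forall_pos_le_add fun ε hε => ?_
  obtain ⟨C, hC, hlt⟩ := dir2 hG hN hA hη hε
  exact le_trans (muAt_le_vF hG hN hη hC) hlt.le
/-- Part (2) of the main theorem. -/
lemma part2 (hG : T.Good) (hN : T.Nice) (p : Cond T) (hnorm : Normal p)
    {A : Set (List ℕ)} (hA : IsFrontAt p p.root A) {m : List ℕ → ℝ}
    (hm : IsMuAt p p.root A (fun ν => muAt p ν) m) : muF p = m p.root := by
  have hroot := p.root_mem
  have hm' : IsMuAt p p.root A (muT p) m := by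
    refine ⟨fun ρ hρ => ?_, hm.2.1, hm.2.2⟩
    rw [hm.1 ρ hρ, muT_eq hG hN (hA.tree_mem hρ)]
  have huniq := vF_uniq hG hN hA hroot (muT_mem p) hm' p.root (self_mem_Bset hroot A)
  rw [muF, muAt_eq_vF hG hN hA hroot, huniq]

/-- the immediate successors of a node form a front. -/
lemma childFront {p : Cond T} {η : List ℕ} (hη : η ∈ p.tree) :
    IsFrontAt p η (↑(p.c η).pos : Set (List ℕ)) := by
  constructor
  · intro ρ hρ
    have := p.pos_sub hη hρ
    exact ⟨this.1, this.2.1⟩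
  · intro x hx
    refine ⟨η.length + 1, ?_⟩
    have h1 : initSeg x (η.length + 1) ∈ p.tree := hx.2 _ (Nat.le_succ _)
    have h2 : η <+: initSeg x (η.length + 1) := by
      conv_lhs => rw [← hx.1]
      exact initSeg_prefix x (Nat.le_succ _)
    exact p.pos_of_mem hη h1 h2 (by rw [initSeg_length])

lemma muAt_harmonic (hG : T.Good) (hN : T.Nice) {p : Cond T} {η : List ℕ}
    (hη : η ∈ p.tree) : muAt p η = T.F (p.c η) (muT p) := by
  have hA := childFront hη
  rw [muAt_eq_vF hG hN hA hη]
  have hcone : InCone p η (↑(p.c η).pos) η := by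
    obtain ⟨ν, hν⟩ := (p.c η).pos_ne
    exact ⟨hη, List.prefix_refl _, ν, hν, (p.pos_sub hη hν).2.1⟩
  have hηA : η ∉ (↑(p.c η).pos : Set (List ℕ)) := by
    intro h
    have := (p.pos_sub hη h).2.2
    omega
  rw [vF_eq hG hN (muT_mem p) hcone hηA]
  exact hG.F_congr _ _ _ fun ν hν => vF_A hG hA hν

lemma exists_child_ge (hG : T.Good) (hN : T.Nice) {p : Cond T} {η : List ℕ}
    (hη : η ∈ p.tree) : ∃ ν ∈ (p.c η).pos, muAt p η ≤ muAt p ν := by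
  obtain ⟨ν₀, hν₀, hsup⟩ := Finset.exists_mem_eq_sup' (p.c η).pos_ne (muT p)
  set M := (p.c η).pos.sup' (p.c η).pos_ne (muT p) with hM
  have hMmem : M ∈ Set.Icc (0:ℝ) 1 := hsup ▸ muT_mem p ν₀
  refine ⟨ν₀, hν₀, ?_⟩
  have h1 : muAt p η ≤ M := by
    rw [muAt_harmonic hG hN hη]
    have h2 : T.F (p.c η) (muT p) ≤ T.F (p.c η) (fun _ => M) := by
      refine hN.mono _ (p.c_mem η hη) _ _ (fun ν _ => muT_mem p ν) (fun ν _ => hMmem)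
        fun ν hν => Finset.le_sup' (muT p) hν
    have h3 : T.F (p.c η) (fun _ => M) = M * T.F (p.c η) (fun _ => 1) := by
      have := hN.scale _ (p.c_mem η hη) M hMmem (fun _ => 1) (fun ν _ => one_Icc ν)
      simpa using this
    have h4 : T.F (p.c η) (fun _ => (1:ℝ)) ≤ 1 := (hG.F_mem _ _ fun ν _ => one_Icc ν).2
    calc T.F (p.c η) (muT p) ≤ M * T.F (p.c η) (fun _ => 1) := h3 ▸ h2
      _ ≤ M * 1 := mul_le_mul_of_nonneg_left h4 hMmem.1
      _ = M := mul_one M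
  rw [← muT_eq hG hN (p.pos_sub hη hν₀).1, ← hsup]
  exact h1

lemma descend (hG : T.Good) (hN : T.Nice) {p : Cond T} {η : List ℕ} (hη : η ∈ p.tree) :
    ∀ k, η.length ≤ k → ∃ ρ ∈ p.tree, η <+: ρ ∧ ρ.length = k ∧ muAt p η ≤ muAt p ρ := by
  intro k
  refine Nat.le_induction ?_ ?_ k
  · exact ⟨η, hη, List.prefix_refl _, rfl, le_refl _⟩
  · rintro k hk ⟨ρ, hρ, hpre, hlen, hle⟩
    obtain ⟨ν, hν, hν2⟩ := exists_child_ge hG hN hρ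
    obtain ⟨h1, h2, h3⟩ := p.pos_sub hρ hν
    exact ⟨ν, h1, hpre.trans h2, by omega, hle.trans hν2⟩

lemma front_max (hG : T.Good) (hN : T.Nice) {p : Cond T} {η : List ℕ} (hη : η ∈ p.tree)
    {A : Set (List ℕ)} (hA : IsFrontAt p η A) :
    ∃ c ∈ A, η <+: c ∧ muAt p η ≤ muAt p c := by
  have key : ∀ ρ ∈ Bset p η A, ∃ c ∈ A, ρ <+: c ∧ muAt p ρ ≤ muAt p c := by
    refine Bset_rec hA hη (fun ρ hρ hρA => ⟨ρ, hρA, List.prefix_refl _, le_refl _⟩)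
      (fun ρ hρ hρA hch => ?_)
    obtain ⟨ν, hν, hν2⟩ := exists_child_ge hG hN hρ.1
    obtain ⟨c, hc, hc2, hc3⟩ := (hch ν hν).2
    exact ⟨c, hc, (p.pos_sub hρ.1 hν).2.1.trans hc2, hν2.trans hc3⟩
  obtain ⟨c, hc, h1, h2⟩ := key η (self_mem_Bset hη A)
  exact ⟨c, hc, h1, h2⟩
/-- `ε_k = 2^(-2^k)` -/
noncomputable def eps (k : ℕ) : ℝ := ((2:ℝ) ^ (2^k : ℕ))⁻¹

lemma eps_pos (k : ℕ) : 0 < eps k := by unfold eps; positivity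

lemma eps_le_one (k : ℕ) : eps k ≤ 1 := by
  unfold eps
  rw [inv_le_one_iff₀]
  right
  exact one_le_pow₀ (by norm_num)

lemma eps_succ (k : ℕ) : eps (k+1) = eps k ^ 2 := by
  unfold eps
  rw [pow_succ, pow_mul, ← inv_pow]

lemma eps_anti {k l : ℕ} (h : k ≤ l) : eps l ≤ eps k := by
  unfold eps
  rw [inv_le_inv₀ (by positivity) (by positivity)]
  exact pow_le_pow_right₀ (by norm_num) (Nat.pow_le_pow_right (by norm_num) h)

lemma eps_le_sixteenth {k : ℕ} (h : 2 ≤ k) : eps k ≤ 1/16 := by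
  refine le_trans (eps_anti h) ?_
  show ((2:ℝ) ^ (2^2 : ℕ))⁻¹ ≤ 1/16
  norm_num

lemma exists_eps_le {b : ℝ} (hb : 0 < b) : ∃ k, eps k ≤ b := by
  obtain ⟨n, hn⟩ := exists_nat_one_div_lt hb
  refine ⟨n, le_trans ?_ hn.le⟩
  show ((2:ℝ) ^ (2^n : ℕ))⁻¹ ≤ 1/((n:ℝ)+1)
  have h1 : (n + 1 : ℕ) ≤ 2 ^ (2^n : ℕ) :=
    le_trans (Nat.lt_two_pow_self (n := n)) (Nat.pow_le_pow_right (by norm_num)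
      (Nat.le_of_lt (Nat.lt_two_pow_self (n := n))))
  have h2 : ((n:ℝ)+1) ≤ (2:ℝ) ^ (2^n : ℕ) := by exact_mod_cast h1
  have h3 := one_div_le_one_div_of_le (by positivity : (0:ℝ) < (n:ℝ)+1) h2
  simpa [one_div] using h3
/-- nodes at which the fusion construction can proceed -/
def GoodNode (p : Cond T) (η : List ℕ) : Prop :=
  η ∈ p.tree ∧ 2 ≤ η.length ∧ (∀ ρ ∈ p.tree, η <+: ρ → (2:ℝ) ≤ (p.c ρ).nor) ∧
    eps η.length ≤ muAt p η

/-- the key application of the splitting axiom (β). -/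
lemma beta_step (hG : T.Good) (hN : T.Nice) {p : Cond T} {η : List ℕ}
    (h : GoodNode p η) : ∃ s : TCreature H, s ∈ T.Sig (p.c η) ∧
      (p.c η).nor - 1 ≤ s.nor ∧
      (∀ ν ∈ s.pos, ν ∈ (p.c η).pos ∧ eps (η.length+1) ≤ muAt p ν) ∧
      (1 - eps η.length) * muAt p η - eps (η.length+1) ≤ T.F s (muT p) := by
  classical
  obtain ⟨hη, hlen2, hnor, hmu⟩ := h
  set k := η.length with hk
  have htK := p.c_mem η hη
  have hnors : (1:ℝ) < (p.c η).nor :=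
    lt_of_lt_of_le (by norm_num) (hnor η hη (List.prefix_refl _))
  set r0 : List ℕ → ℝ := fun ν => if eps (k+1) ≤ muT p ν then muT p ν else 0 with hr0
  set r1 : List ℕ → ℝ := fun ν => if eps (k+1) ≤ muT p ν then 0 else muT p ν with hr1
  have hr0mem : ∀ ν, r0 ν ∈ Set.Icc (0:ℝ) 1 := by
    intro ν
    simp only [hr0]
    split
    · exact muT_mem p ν
    · exact ⟨le_refl _, zero_le_one⟩
  have hr1mem : ∀ ν, r1 ν ∈ Set.Icc (0:ℝ) 1 := by
    intro ν
    simp only [hr1]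
    split
    · exact ⟨le_refl _, zero_le_one⟩
    · exact muT_mem p ν
  have hmem : ∀ ν ∈ (p.c η).pos, muT p ν ∈ Set.Icc (0:ℝ) 1 ∧ r0 ν ∈ Set.Icc (0:ℝ) 1 ∧
      r1 ν ∈ Set.Icc (0:ℝ) 1 := fun ν _ => ⟨muT_mem p ν, hr0mem ν, hr1mem ν⟩
  have hsum : ∀ ν ∈ (p.c η).pos, muT p ν ≤ r0 ν + r1 ν := by
    intro ν _
    simp only [hr0, hr1]
    split <;> simp
  have hthr : ((2:ℝ) ^ (2 ^ (p.c η).node.length))⁻¹ ≤ T.F (p.c η) (muT p) := by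
    rw [p.node_eq hη, ← muAt_harmonic hG hN hη]
    exact hmu
  obtain ⟨c0, c1, s0, s1, hs0, hs1, hcsum, hc0, hc1⟩ :=
    hN.split _ htK hnors (muT p) r0 r1 hmem hsum hthr
  have hFr : T.F (p.c η) (muT p) = muAt p η := (muAt_harmonic hG hN hη).symm
  have hnode : (p.c η).node.length = k := by rw [p.node_eq hη]
  rw [hnode, hFr] at hcsum
  rw [show ((2:ℝ)^(2^k:ℕ))⁻¹ = eps k from rfl] at hcsum
  have he2 : eps (k+1) = eps k ^ 2 := eps_succ k
  have hepos := eps_pos k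
  have hesm := eps_le_sixteenth hlen2
  have hmu1 := (muAt_mem hG hN hη).2
  -- c1 is small
  have hc1le : c1 ≤ eps (k+1) := by
    rcases le_or_gt c1 0 with h' | h'
    · exact h'.trans (eps_pos _).le
    · obtain ⟨_, hpos1, hF1⟩ := hc1 h'
      have hs1K : s1 ∈ T.K := hG.sig_mem _ htK hs1
      have hr1small : ∀ ν, r1 ν ≤ eps (k+1) := by
        intro ν
        simp only [hr1]
        split
        · exact (eps_pos _).le
        · next hcond => linarith [lt_of_not_ge hcond]
      have hconst : ∀ ν : List ℕ, (fun _ : List ℕ => eps (k+1)) ν ∈ Set.Icc (0:ℝ) 1 :=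
        fun _ => ⟨(eps_pos _).le, eps_le_one _⟩
      have h1 : T.F s1 r1 ≤ T.F s1 (fun _ => eps (k+1)) :=
        hN.mono _ hs1K _ _ (fun ν _ => hr1mem ν) (fun ν _ => hconst ν)
          (fun ν _ => hr1small ν)
      have h2 : T.F s1 (fun _ => eps (k+1)) = eps (k+1) * T.F s1 (fun _ => 1) := by
        have := hN.scale _ hs1K (eps (k+1)) ⟨(eps_pos _).le, eps_le_one _⟩
          (fun _ => 1) (fun ν _ => one_Icc ν)
        simpa using this
      have h3 : T.F s1 (fun _ => (1:ℝ)) ≤ 1 := (hG.F_mem _ _ fun ν _ => one_Icc ν).2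
      calc c1 ≤ T.F s1 r1 := hF1
        _ ≤ eps (k+1) * T.F s1 (fun _ => 1) := h2 ▸ h1
        _ ≤ eps (k+1) * 1 := mul_le_mul_of_nonneg_left h3 (eps_pos _).le
        _ = eps (k+1) := mul_one _
  have hc0ge : (1 - eps k) * muAt p η - eps (k+1) ≤ c0 := by linarith
  have hc0pos : 0 < c0 := by
    refine lt_of_lt_of_le ?_ hc0ge
    rw [he2]
    nlinarith [hmu, hepos, hesm, hmu1]
  obtain ⟨hnor0, hpos0, hF0⟩ := hc0 hc0pos
  have hposes : ∀ ν ∈ s0.pos, ν ∈ (p.c η).pos ∧ eps (k+1) ≤ muT p ν ∧ r0 ν = muT p ν := by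
    intro ν hν
    have h1 : ν ∈ (p.c η).pos := hG.sig_pos _ _ hs0 hν
    have h2 := hpos0 ν hν
    simp only [hr0] at h2 ⊢
    split at h2
    · next hcond => exact ⟨h1, hcond, by simp [hr0, hcond]⟩
    · exact absurd h2 (lt_irrefl 0)
  refine ⟨s0, hs0, hnor0, fun ν hν => ?_, ?_⟩
  · obtain ⟨h1, h2, _⟩ := hposes ν hν
    rw [← muT_eq hG hN (p.pos_sub hη h1).1]
    exact ⟨h1, h2⟩
  · have : T.F s0 r0 = T.F s0 (muT p) := hG.F_congr _ _ _ fun ν hν => (hposes ν hν).2.2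
    calc (1 - eps k) * muAt p η - eps (k+1) ≤ c0 := hc0ge
      _ ≤ T.F s0 r0 := hF0
      _ = T.F s0 (muT p) := this

open Classical in
/-- the chosen shrunk creature at a good node. -/
noncomputable def qc (hG : T.Good) (hN : T.Nice) (p : Cond T) (η : List ℕ) : TCreature H :=
  if h : GoodNode p η then (beta_step hG hN h).choose else p.c η

lemma qc_spec (hG : T.Good) (hN : T.Nice) {p : Cond T} {η : List ℕ} (h : GoodNode p η) :
    qc hG hN p η ∈ T.Sig (p.c η) ∧
    (p.c η).nor - 1 ≤ (qc hG hN p η).nor ∧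
    (∀ ν ∈ (qc hG hN p η).pos, ν ∈ (p.c η).pos ∧ eps (η.length+1) ≤ muAt p ν) ∧
    (1 - eps η.length) * muAt p η - eps (η.length+1) ≤ T.F (qc hG hN p η) (muT p) := by
  rw [qc, dif_pos h]
  exact (beta_step hG hN h).choose_spec

lemma goodNode_child (hG : T.Good) (hN : T.Nice) {p : Cond T} {η ν : List ℕ}
    (h : GoodNode p η) (hν : ν ∈ (qc hG hN p η).pos) : GoodNode p ν := by
  obtain ⟨hs, _, hpos, _⟩ := qc_spec hG hN h
  obtain ⟨h1, h2⟩ := hpos ν hν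
  obtain ⟨ht, hpre, hlen⟩ := p.pos_sub h.1 h1
  have hl2 := h.2.1
  refine ⟨ht, by omega, fun ρ hρ hp => h.2.2.1 ρ hρ (hpre.trans hp), ?_⟩
  rw [hlen]
  exact h2
/-- levels of the fusion tree -/
def Rset (hG : T.Good) (hN : T.Nice) (p : Cond T) (s : List ℕ) : ℕ → Set (List ℕ)
  | 0 => {s}
  | n+1 => {ν | ∃ ρ ∈ Rset hG hN p s n, ν ∈ (qc hG hN p ρ).pos}

variable {hG : T.Good} {hN : T.Nice} {p : Cond T} {s : List ℕ}

lemma qc_node (hG : T.Good) (hN : T.Nice) {p : Cond T} {η : List ℕ} (h : GoodNode p η) :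
    (qc hG hN p η).node = η := by
  rw [hG.sig_node _ _ (qc_spec hG hN h).1, p.node_eq h.1]

lemma qc_pos_sub (hG : T.Good) (hN : T.Nice) {p : Cond T} {η ν : List ℕ}
    (h : GoodNode p η) (hν : ν ∈ (qc hG hN p η).pos) :
    ν ∈ p.tree ∧ η <+: ν ∧ ν.length = η.length + 1 :=
  p.pos_sub h.1 (((qc_spec hG hN h).2.2.1 ν hν).1)

lemma Rset_facts (hs : GoodNode p s) :
    ∀ n, ∀ ρ ∈ Rset hG hN p s n, GoodNode p ρ ∧ ρ.length = s.length + n ∧ s <+: ρ := by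
  intro n
  induction n with
  | zero =>
    rintro ρ rfl
    exact ⟨hs, rfl, List.prefix_refl _⟩
  | succ n ih =>
    rintro ν ⟨ρ, hρ, hν⟩
    obtain ⟨hg, hl, hp⟩ := ih ρ hρ
    obtain ⟨_, hpre, hlen⟩ := qc_pos_sub hG hN hg hν
    exact ⟨goodNode_child hG hN hg hν, by omega, hp.trans hpre⟩

lemma Rset_take (hs : GoodNode p s) :
    ∀ n, ∀ ρ ∈ Rset hG hN p s n, ∀ m ≤ n, ρ.take (s.length + m) ∈ Rset hG hN p s m := by
  intro n
  induction n with
  | zero =>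
    rintro ρ rfl m hm
    rw [Nat.le_zero.mp hm]
    simp [Rset]
  | succ n ih =>
    rintro ν ⟨ρ, hρ, hν⟩ m hm
    obtain ⟨hg, hl, hp⟩ := Rset_facts hs n ρ hρ
    obtain ⟨_, hpre, hlen⟩ := qc_pos_sub hG hN hg hν
    rcases Nat.lt_or_ge m (n+1) with h' | h'
    · have hρtake : ρ = ν.take ρ.length := List.prefix_iff_eq_take.mp hpre
      have : ν.take (s.length + m) = ρ.take (s.length + m) := by
        rw [hρtake, List.take_take]
        congr 1
        omega
      rw [this]
      exact ih ρ hρ m (by omega)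
    · have hmeq : m = n + 1 := by omega
      subst hmeq
      have : ν.take (s.length + (n+1)) = ν := List.take_of_length_le (by omega)
      rw [this]
      exact ⟨ρ, hρ, hν⟩

/-- the fusion condition -/
noncomputable def qCond (hG : T.Good) (hN : T.Nice) (p : Cond T) (s : List ℕ)
    (hs : GoodNode p s) : Cond T where
  tree := ⋃ n, Rset hG hN p s n
  root := s
  root_mem := Set.mem_iUnion.mpr ⟨0, rfl⟩
  root_le := by
    intro η hη
    obtain ⟨n, hn⟩ := Set.mem_iUnion.mp hη
    exact (Rset_facts hs n η hn).2.2
  closed := by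
    intro η hη ν h1 h2
    obtain ⟨n, hn⟩ := Set.mem_iUnion.mp hη
    obtain ⟨hg, hl, hp⟩ := Rset_facts hs n η hn
    have hν1 : s.length ≤ ν.length := h1.length_le
    have hν2 : ν.length ≤ η.length := h2.length_le
    have hν3 : ν = η.take ν.length := List.prefix_iff_eq_take.mp h2
    refine Set.mem_iUnion.mpr ⟨ν.length - s.length, ?_⟩
    have := Rset_take hs n η hn (ν.length - s.length) (by omega)
    rw [show s.length + (ν.length - s.length) = ν.length by omega] at this
    rwa [← hν3] at this
  c := qc hG hN p
  c_mem := by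
    intro η hη
    obtain ⟨n, hn⟩ := Set.mem_iUnion.mp hη
    have hg := (Rset_facts hs n η hn).1
    exact hG.sig_mem _ (p.c_mem η hg.1) (qc_spec hG hN hg).1
  c_node := by
    intro η hη
    obtain ⟨n, hn⟩ := Set.mem_iUnion.mp hη
    exact qc_node hG hN (Rset_facts hs n η hn).1
  succ_eq := by
    intro η hη ν
    obtain ⟨n, hn⟩ := Set.mem_iUnion.mp hη
    obtain ⟨hg, hl, hp⟩ := Rset_facts hs n η hn
    constructor
    · rintro ⟨hν, hpre, hlen⟩
      obtain ⟨m, hm⟩ := Set.mem_iUnion.mp hν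
      have hm2 := (Rset_facts hs m ν hm).2.1
      have hmeq : m = n + 1 := by omega
      subst hmeq
      obtain ⟨σ, hσ, hνσ⟩ := hm
      obtain ⟨_, hσpre, hσlen⟩ := qc_pos_sub hG hN (Rset_facts hs n σ hσ).1 hνσ
      have : σ = η := by
        refine eq_of_prefix_of_length (prefix_of_le_prefix hσpre hpre (by omega)) (by omega)
      rwa [this] at hνσ
    · intro hν
      obtain ⟨_, hpre, hlen⟩ := qc_pos_sub hG hN hg hν
      exact ⟨Set.mem_iUnion.mpr ⟨n+1, ⟨η, hn, hν⟩⟩, hpre, hlen⟩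

lemma qCond_good (hs : GoodNode p s) :
    ∀ η ∈ (qCond hG hN p s hs).tree, GoodNode p η := by
  intro η hη
  obtain ⟨n, hn⟩ := Set.mem_iUnion.mp hη
  exact (Rset_facts hs n η hn).1

lemma qCond_condLe (hs : GoodNode p s) : CondLe p (qCond hG hN p s hs) := by
  constructor
  · intro η hη
    exact (qCond_good hs η hη).1
  · intro η hη
    exact (qc_spec hG hN (qCond_good hs η hη)).1

lemma qCond_qtree4 (hs : GoodNode p s) (hQ : Qtree4 p) : Qtree4 (qCond hG hN p s hs) := by
  intro n
  obtain ⟨An, hAn, hAnnor⟩ := hQ (n+1)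
  set q := qCond hG hN p s hs with hq
  refine ⟨{ρ | ρ ∈ q.tree ∧ ∃ ν ∈ An, ν <+: ρ}, ⟨fun ρ hρ => ⟨hρ.1, q.root_le ρ hρ.1⟩, ?_⟩, ?_⟩
  · intro x hx
    have hbp : IsBranchAt p s x := ⟨hx.1, fun m hm => (qCond_condLe hs).1 (hx.2 m hm)⟩
    have hbroot : IsBranchAt p p.root x :=
      isBranchAt_of_prefix p p.root_mem hs.1 (p.root_le s hs.1) hbp
    obtain ⟨j, hj⟩ := hAn.2 x hbroot
    refine ⟨max j s.length, hx.2 _ (le_max_right _ _), initSeg x j, hj,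
      initSeg_prefix x (le_max_left _ _)⟩
  · rintro a ⟨haq, ν, hν, hνa⟩ ρ hρ haρ
    have hρp : ρ ∈ p.tree := (qCond_condLe hs).1 hρ
    have h1 := hAnnor ν hν ρ hρp (hνa.trans haρ)
    have hg := qCond_good hs ρ hρ
    have h2 := (qc_spec hG hN hg).2.1
    show (n:ℝ) ≤ (qc hG hN p ρ).nor
    push_cast at h1
    linarith
lemma qCond_lower (hs : GoodNode p s) :
    ∀ η ∈ (qCond hG hN p s hs).tree,
      muAt p η * (1 - 4 * eps η.length) ≤ muAt (qCond hG hN p s hs) η := by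
  intro η hη
  set q := qCond hG hN p s hs with hqdef
  refine le_muAt hG hN hη fun C hC => ?_
  have claim : ∀ ρ ∈ Bset q η C,
      muAt p ρ * (1 - 4 * eps ρ.length) ≤ vF q η C (fun _ => 1) ρ := by
    refine Bset_rec hC hη (fun ρ hρ hρC => ?_) (fun ρ hρ hρC hch => ?_)
    · rw [vF_A hG hC hρC]
      have hg := qCond_good hs ρ hρ.1
      have hμ := muAt_mem hG hN hg.1
      have he := eps_pos ρ.length
      have he16 := eps_le_sixteenth hg.2.1
      nlinarith [hμ.1, hμ.2]
    · have hg := qCond_good hs ρ hρ.1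
      set k := ρ.length with hkdef
      have hk2 : 2 ≤ k := hg.2.1
      have hcone := Bset_inCone hC hη hρ
      rw [vF_eq hG hN one_Icc hcone hρC]
      have hqcK : q.c ρ ∈ T.K := q.c_mem ρ hρ.1
      have hbIcc : (1 - 4 * eps (k+1)) ∈ Set.Icc (0:ℝ) 1 := by
        have h1 := eps_pos (k+1)
        have h2 := eps_le_sixteenth (show 2 ≤ k+1 by omega)
        constructor <;> nlinarith
      have step1 : T.F (q.c ρ) (fun ν => (1 - 4 * eps (k+1)) * muT p ν) ≤
          T.F (q.c ρ) (vF q η C (fun _ => 1)) := by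
        refine hN.mono _ hqcK _ _ (fun ν _ => ?_) (fun ν _ => vF_mem hG one_Icc ν)
          (fun ν hν => ?_)
        · have := muT_mem p ν
          constructor <;> nlinarith [hbIcc.1, hbIcc.2, this.1, this.2]
        · have hν' : ν ∈ (qc hG hN p ρ).pos := hν
          obtain ⟨hνt, _, hνlen⟩ := qc_pos_sub hG hN hg hν'
          have h1 := (hch ν hν).2
          rw [hνlen] at h1
          rw [← muT_eq hG hN hνt] at h1
          calc (1 - 4 * eps (k+1)) * muT p ν = muT p ν * (1 - 4 * eps (k+1)) := mul_comm _ _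
            _ ≤ vF q η C (fun _ => 1) ν := h1
      have step2 : T.F (q.c ρ) (fun ν => (1 - 4 * eps (k+1)) * muT p ν) =
          (1 - 4 * eps (k+1)) * T.F (q.c ρ) (muT p) :=
        hN.scale _ hqcK _ hbIcc (muT p) (fun ν _ => muT_mem p ν)
      have step3 : (1 - eps k) * muAt p ρ - eps (k+1) ≤ T.F (q.c ρ) (muT p) :=
        (qc_spec hG hN hg).2.2.2
      have harith : muAt p ρ * (1 - 4 * eps k) ≤
          (1 - 4 * eps (k+1)) * ((1 - eps k) * muAt p ρ - eps (k+1)) := by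
        have hesq := eps_succ k
        have hepos := eps_pos k
        have he16 := eps_le_sixteenth hk2
        have hμlo : eps k ≤ muAt p ρ := hg.2.2.2
        have hμhi := (muAt_mem hG hN hg.1).2
        rw [hesq]
        nlinarith [sq_nonneg (eps k), hepos.le, mul_le_mul_of_nonneg_right hμlo hepos.le]
      calc muAt p ρ * (1 - 4 * eps k)
          ≤ (1 - 4 * eps (k+1)) * ((1 - eps k) * muAt p ρ - eps (k+1)) := harith
        _ ≤ (1 - 4 * eps (k+1)) * T.F (q.c ρ) (muT p) :=
            mul_le_mul_of_nonneg_left step3 hbIcc.1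
        _ = T.F (q.c ρ) (fun ν => (1 - 4 * eps (k+1)) * muT p ν) := step2.symm
        _ ≤ T.F (q.c ρ) (vF q η C (fun _ => 1)) := step1
  exact claim η (self_mem_Bset hη C)

lemma qCond_special (hs : GoodNode p s) : Special (qCond hG hN p s hs) := by
  intro η hη
  have hg := qCond_good hs η hη
  have h1 := qCond_lower hs η hη
  have hμlo : eps η.length ≤ muAt p η := hg.2.2.2
  have hμhi := (muAt_mem hG hN hg.1).2
  have hepos := eps_pos η.length
  have he16 := eps_le_sixteenth hg.2.1
  have h2 : ((2:ℝ) ^ (2 ^ (η.length+1)))⁻¹ = eps (η.length + 1) := rfl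
  rw [h2, eps_succ]
  nlinarith

/-- Part (1) of the main theorem. -/
lemma part1 (hG : T.Good) (hN : T.Nice) (p : Cond T) (hQ4 : Qtree4 p) (hpos : 0 < muF p) :
    ∃ q : Cond T, Qtree4 q ∧ 0 < muF q ∧ Special q ∧ CondLe p q := by
  obtain ⟨A2, hA2, hA2nor⟩ := hQ4 2
  have hpos' : 0 < muAt p p.root := hpos
  obtain ⟨c, hc, hcpre, hcmu⟩ := front_max hG hN p.root_mem hA2
  have hb : 0 < muAt p c := lt_of_lt_of_le hpos' hcmu
  obtain ⟨k1, hk1⟩ := exists_eps_le hb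
  set k0 := max (max 2 c.length) k1 with hk0
  have hck0 : c.length ≤ k0 := le_trans (le_max_right 2 c.length) (le_max_left _ k1)
  obtain ⟨s, hstree, hspre, hslen, hsmu⟩ := descend hG hN (hA2.tree_mem hc) k0 hck0
  have hsGood : GoodNode p s := by
    refine ⟨hstree, ?_, fun ρ hρ hp => ?_, ?_⟩
    · rw [hslen]
      exact le_trans (le_trans (le_max_left 2 c.length) (le_max_left _ k1)) (le_refl _)
    · have := hA2nor c hc ρ hρ (hspre.trans hp)
      exact_mod_cast this
    · rw [hslen]
      exact le_trans (le_trans (eps_anti (le_max_right _ k1)) hk1) hsmu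
  have hspec := qCond_special (hG := hG) (hN := hN) hsGood
  have hposq : 0 < muF (qCond hG hN p s hsGood) :=
    lt_of_lt_of_le (by positivity) (hspec _ (qCond hG hN p s hsGood).root_mem)
  exact ⟨qCond hG hN p s hsGood, qCond_qtree4 (hG := hG) (hN := hN) hsGood hQ4, hposq,
    hspec, qCond_condLe (hG := hG) (hN := hN) hsGood⟩

end Aux

/-- Proposition `nordense`: (1) special conditions are dense in
`Q^mt_4(K,Σ,F)`; (2) for a normal `p ∈ Q^mt_∅(K,Σ,F)` and a front `A` of its tree,
`μ^F(p) = μ^f_{p,A}(root p)` where `f(ν) = μ^F_p(ν)` on `A`. -/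
theorem special_dense_and_front_formula
    (T : MTriple H) (hG : T.Good) (hN : T.Nice) :
    (∀ p : Cond T, Qtree4 p → 0 < muF p →
      ∃ q : Cond T, Qtree4 q ∧ 0 < muF q ∧ Special q ∧ CondLe p q) ∧
    (∀ p : Cond T, 0 < muF p → Normal p →
      ∀ A : Set (List ℕ), IsFrontAt p p.root A →
      ∀ m : List ℕ → ℝ, IsMuAt p p.root A (fun ν => muAt p ν) m →
        muF p = m p.root) := by
  constructor
  · intro p hQ4 hpos
    exact part1 hG hN p hQ4 hpos
  · intro p _ hnorm A hA m hm
    exact part2 hG hN p hnorm hA hm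

end MeasuredTrees
end

section
/- If X ⊆ ℝ has positive outer Lebesgue measure and f : X → ℝ is continuous (for the subspace topology on X) and injective, then the image f[X] is not universally negligible. In particular, every universally negligible subset of ℝ is Lebesgue null. -/
open MeasureTheory

/-- A set `Z ⊆ ℝ` (with the subspace topology, whose Borel σ-algebra is the trace
σ-algebra) is universally negligible if there is no Borel probability measure on `Z`
vanishing on all singletons. -/
def UniversallyNegligible (Z : Set ℝ) : Prop :=
  ¬ ∃ μ : Measure Z, IsProbabilityMeasure μ ∧ ∀ z : Z, μ {z} = 0

/-!
Outer measure restricted to `X` is a genuine measure on the subspace `X`: its measurable sets are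
the traces `B ∩ X` of measurable `B`, and `B ↦ μ (B ∩ X)` is additive because `B` splits every
set additively. For Lebesgue measure this trace has no atoms and mass `μ X > 0`; pushing it along
the injective Borel map `f` and normalising gives an atomless probability measure on `f[X]`. To
make the mass finite, Lebesgue measure is first replaced by an equivalent finite measure.
-/

open Set

namespace MeasureTheory.Measure

variable {α β : Type*} [MeasurableSpace α] [MeasurableSpace β]

/-- Unlike `μ.comap Subtype.val`, which is `0` unless `s` is null measurable, this gives the
subspace `s` its full outer measure for every `s`. -/
noncomputable def trace (μ : Measure α) (s : Set α) : Measure s :=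
  (OuterMeasure.comap Subtype.val μ.toOuterMeasure).toMeasure <| by
    rintro _ ⟨B, hB, rfl⟩
    refine (OuterMeasure.isCaratheodory_iff _).2 fun t ↦ ?_
    simp only [OuterMeasure.comap_apply, Measure.coe_toOuterMeasure, image_inter_preimage,
      image_sdiff_preimage, measure_inter_add_sdiff _ hB]

variable {μ : Measure α} {s : Set α}

theorem trace_apply {t : Set s} (ht : MeasurableSet t) : μ.trace s t = μ (Subtype.val '' t) := by
  rw [trace, toMeasure_apply _ _ ht, OuterMeasure.comap_apply, Measure.coe_toOuterMeasure]

@[simp]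
theorem trace_univ : μ.trace s univ = μ s := by
  rw [trace_apply MeasurableSet.univ, Subtype.coe_image_univ]

instance [IsFiniteMeasure μ] : IsFiniteMeasure (μ.trace s) :=
  ⟨by simpa only [trace_univ] using measure_lt_top μ s⟩

instance [MeasurableSingletonClass α] [NullSingletonClass μ] :
    NullSingletonClass (μ.trace s) :=
  ⟨fun x ↦ by rw [trace_apply (measurableSet_singleton x), image_singleton, measure_singleton]⟩

theorem nullSingletonClass_map_of_injective [MeasurableSingletonClass β] [NullSingletonClass μ] {f : α → β}
    (hf : Measurable f) (hinj : Function.Injective f) : NullSingletonClass (μ.map f) :=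
  ⟨fun y ↦ by
    rw [map_apply hf (measurableSet_singleton y)]
    exact (Set.subsingleton_singleton.preimage hinj).measure_zero μ⟩

instance [SFinite μ] [NullSingletonClass μ] : NullSingletonClass μ.toFinite :=
  ⟨fun x ↦ toFinite_apply_eq_zero_iff.2 (measure_singleton x)⟩

end MeasureTheory.Measure

theorem not_universallyNegligible_of_measure {Z : Set ℝ} (μ : Measure Z) [IsFiniteMeasure μ]
    [NeZero μ] [NullSingletonClass μ] : ¬ UniversallyNegligible Z :=
  not_not.2 ⟨(μ univ)⁻¹ • μ, inferInstance, fun z ↦ by simp⟩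

theorem not_universallyNegligible_range_of_measurable {α : Type*} [MeasurableSpace α]
    [MeasurableSingletonClass α] (μ : Measure α) [SFinite μ] [NullSingletonClass μ] {X : Set α}
    (f : X → ℝ) (hX : μ X ≠ 0) (hf : Measurable f) (hinj : Function.Injective f) :
    ¬ UniversallyNegligible (range f) := by
  have hφ : Measurable (rangeFactorization f) := hf.subtype_mk
  set ν := (μ.toFinite.trace X).map (rangeFactorization f)
  have := Measure.nullSingletonClass_map_of_injective (μ := μ.toFinite.trace X) hφ
    (rangeFactorization_injective.2 hinj)
  have hν : ν univ ≠ 0 := by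
    rw [Measure.map_apply hφ .univ, preimage_univ, Measure.trace_univ]
    exact mt toFinite_apply_eq_zero_iff.1 hX
  have : NeZero ν := ⟨Measure.measure_univ_ne_zero.1 hν⟩
  exact not_universallyNegligible_of_measure ν

/-- a continuous injective image of a set of positive outer Lebesgue
measure is not universally negligible; in particular, universally negligible subsets
of `ℝ` are Lebesgue null. -/
theorem continuous_injective_image_not_universallyNegligible :
    (∀ (X : Set ℝ) (f : X → ℝ), 0 < volume X → Continuous f → Function.Injective f →
      ¬ UniversallyNegligible (Set.range f)) ∧
    (∀ Z : Set ℝ, UniversallyNegligible Z → volume Z = 0) := by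
  refine ⟨fun X f hX hf hinj ↦
    not_universallyNegligible_range_of_measurable volume f hX.ne' hf.measurable hinj, fun Z hZ ↦ ?_⟩
  by_contra hZ0
  exact not_universallyNegligible_range_of_measurable volume (Subtype.val : Z → ℝ) hZ0
    measurable_subtype_coe Subtype.val_injective (by rwa [Subtype.range_coe])
end
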